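/- arXiv:2309.01589 — 5 statements merged into one kernel-verified Lean document; each statement's English description precedes it below -/
import Mathlib

section
/- If ∑a_n(m,k,q) is a convergent generalized Ferens series satisfying conditions (GF1) and (GF2), then the Lebesgue measure of the Cantorval A(a_n) equals the Lebesgue measure of its interior. -/
open Set MeasureTheory Pointwise

/-- The achievement set (set of all subsums) of the series `∑ a n`. -/
noncomputable def achievementSet (a : ℕ → ℝ) : Set ℝ :=
  {x | ∃ I : Set ℕ, HasSum (fun i : I => a i) x}

/-- `tail a n` is the sum of the terms with index `≥ n`. -/
noncomputable def tail (a : ℕ → ℝ) (n : ℕ) : ℝ := ∑' i : ℕ, a (n + i)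

/-- The set of `k`-initial subsums: sums over subsets of the first `k` terms. -/
def Fset (a : ℕ → ℝ) (k : ℕ) : Set ℝ :=
  {x | ∃ I : Finset ℕ, I ⊆ Finset.range k ∧ x = ∑ i ∈ I, a i}

/-- The `k`-th iterate `I_k = ⋃_{f ∈ F_k} [f, f + r_k]`. -/
noncomputable def iter (a : ℕ → ℝ) (k : ℕ) : Set ℝ :=
  ⋃ f ∈ Fset a k, Set.Icc f (f + tail a k)

/-- A Cantor set: a nonempty compact perfect nowhere dense subset of `ℝ`. -/
def IsCantorSet (C : Set ℝ) : Prop :=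
  C.Nonempty ∧ IsCompact C ∧ Perfect C ∧ interior C = ∅

/-- A Cantorval: a nonempty compact set equal to the closure of its interior such that
both endpoints of every nontrivial connected component are accumulation points of
trivial (one-point) components. -/
def IsCantorval (P : Set ℝ) : Prop :=
  P.Nonempty ∧ IsCompact P ∧ P = closure (interior P) ∧
  ∀ x ∈ P, (connectedComponentIn P x).Nontrivial →
    ∀ y ∈ ({sInf (connectedComponentIn P x), sSup (connectedComponentIn P x)} : Set ℝ),
      ∀ ε > 0, ∃ z ∈ P, z ≠ y ∧ |z - y| < ε ∧ connectedComponentIn P z = {z}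

/-- Partial sums K_j = k_1 + ... + k_j of the block lengths. -/
def Kf (k : ℕ → ℕ) : ℕ → ℕ
  | 0 => 0
  | j + 1 => Kf k j + k j

/-- s_n = ∑_{i=1}^{k_n - 1} (m_n + i). -/
def sGF (m k : ℕ → ℕ) (i : ℕ) : ℕ := ∑ t ∈ Finset.range (k i - 1), (m i + t + 1)


section GFaux
open Finset Filter


/-- Subset sums of `{0, ..., kk-1}` with fixed cardinality `j` realize every value between
the minimal and maximal possible sums. -/
lemma exists_subset_sum_card (kk : ℕ) : ∀ j c : ℕ, j ≤ kk →
    (∑ t ∈ Finset.range j, t) ≤ c → c ≤ ∑ t ∈ Finset.Ico (kk - j) kk, t →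
    ∃ E ⊆ Finset.range kk, E.card = j ∧ ∑ t ∈ E, t = c := by
  induction kk with
  | zero =>
    intro j c hj h1 h2
    interval_cases j
    simp only [Finset.range_zero, Finset.sum_empty] at h1
    simp only [Finset.Ico_self, Finset.sum_empty, Nat.le_zero] at h2
    exact ⟨∅, by simp, by simp, by simp [h2]⟩
  | succ kk ih =>
    intro j c hj h1 h2
    rcases Nat.eq_zero_or_pos j with hj0 | hjpos
    · subst hj0
      simp only [Nat.sub_zero, Finset.Ico_self, Finset.sum_empty, Nat.le_zero] at h2
      exact ⟨∅, by simp, by simp, by simp [h2]⟩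
    obtain ⟨j', rfl⟩ : ∃ j', j = j' + 1 := ⟨j - 1, by omega⟩
    by_cases hc : kk + ∑ t ∈ Finset.range j', t ≤ c
    · -- use the top element kk
      have hj' : j' ≤ kk := by omega
      have hsplit : ∑ t ∈ Finset.Ico (kk + 1 - (j' + 1)) (kk + 1), t
          = (∑ t ∈ Finset.Ico (kk - j') kk, t) + kk := by
        have h : kk + 1 - (j' + 1) = kk - j' := by omega
        rw [h, Finset.sum_Ico_succ_top (by omega)]
      have h2' : c - kk ≤ ∑ t ∈ Finset.Ico (kk - j') kk, t := by omega
      have h1' : (∑ t ∈ Finset.range j', t) ≤ c - kk := by omega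
      obtain ⟨E, hE, hcard, hsumE⟩ := ih j' (c - kk) hj' h1' h2'
      have hkk : kk ∉ E := fun h => by simpa using Finset.mem_range.mp (hE h)
      refine ⟨insert kk E, ?_, ?_, ?_⟩
      · intro x hx
        rcases Finset.mem_insert.mp hx with rfl | hx
        · exact Finset.self_mem_range_succ x
        · exact Finset.range_subset_range.mpr (by omega) (hE hx)
      · rw [Finset.card_insert_of_notMem hkk, hcard]
      · rw [Finset.sum_insert hkk, hsumE]; omega
    · -- stay inside range kk
      have hjk : j' + 1 ≤ kk := by
        by_contra h
        have hj2 : j' + 1 = kk + 1 := by omega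
        have : ∑ t ∈ Finset.range (j' + 1), t = kk + ∑ t ∈ Finset.range j', t := by
          rw [show j' = kk from by omega]
          rw [Finset.sum_range_succ]; omega
        omega
      have hshift : ∀ jj : ℕ, jj ≤ kk → ∑ t ∈ Finset.Ico (kk - jj) kk, t
          = (∑ t ∈ Finset.range jj, t) + jj * (kk - jj) := by
        intro jj hjj
        rw [Finset.sum_Ico_eq_sum_range]
        have h : kk - (kk - jj) = jj := by omega
        rw [h, Finset.sum_add_distrib, Finset.sum_const, Finset.card_range, smul_eq_mul]
        exact Nat.add_comm _ _
      have h2' : c ≤ ∑ t ∈ Finset.Ico (kk - (j' + 1)) kk, t := by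
        -- c < kk + ∑ range j' ; need kk - 1 ≤ j' + (j'+1)*(kk-(j'+1))
        have hprod : kk - (j' + 1) ≤ (j' + 1) * (kk - (j' + 1)) :=
          Nat.le_mul_of_pos_left _ (by omega)
        have := hshift (j' + 1) hjk
        have hsum1 : ∑ t ∈ Finset.range (j' + 1), t = (∑ t ∈ Finset.range j', t) + j' :=
          Finset.sum_range_succ _ _
        omega
      obtain ⟨E, hE, hcard, hsumE⟩ := ih (j' + 1) c hjk h1 h2'
      exact ⟨E, hE.trans (Finset.range_subset_range.mpr (by omega)), hcard, hsumE⟩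



/-- Every value `d` with `mm ≤ d ≤ total - mm` is a subset sum of `{mm, mm+1, ..., mm+kk-1}`. -/
lemma exists_subset_sum_shift (mm kk d : ℕ) (hm1 : 1 ≤ mm) (hk1 : mm < kk)
    (hd1 : mm ≤ d) (hd2 : d + mm ≤ ∑ t ∈ Finset.range kk, (mm + t)) :
    ∃ E ⊆ Finset.range kk, ∑ t ∈ E, (mm + t) = d := by
  classical
  have htot : ∑ t ∈ Finset.range kk, (mm + t) = kk * mm + ∑ t ∈ Finset.range kk, t := by
    rw [Finset.sum_add_distrib, Finset.sum_const, Finset.card_range, smul_eq_mul]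
  have hP1 : 1 * mm + ∑ t ∈ Finset.range 1, t ≤ d := by simpa using hd1
  obtain ⟨j, hj1, hjk, hPj, hnotP⟩ : ∃ j, 1 ≤ j ∧ j ≤ kk ∧
      (j * mm + ∑ t ∈ Finset.range j, t ≤ d) ∧
      (j + 1 ≤ kk → ¬ (j + 1) * mm + ∑ t ∈ Finset.range (j + 1), t ≤ d) := by
    set P : ℕ → Prop := fun j => j * mm + ∑ t ∈ Finset.range j, t ≤ d with hPdef
    have hP1' : P 1 := hP1
    refine ⟨Nat.findGreatest P kk,
      Nat.le_findGreatest (P := P) (by omega) hP1', Nat.findGreatest_le (P := P) kk,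
      Nat.findGreatest_spec (P := P) (m := 1) (by omega) hP1',
      fun h => Nat.findGreatest_is_greatest (P := P) (Nat.lt_succ_self _) h⟩
  have hshift : ∑ t ∈ Finset.Ico (kk - j) kk, t
      = (∑ t ∈ Finset.range j, t) + j * (kk - j) := by
    rw [Finset.sum_Ico_eq_sum_range]
    have h : kk - (kk - j) = j := by omega
    rw [h, Finset.sum_add_distrib, Finset.sum_const, Finset.card_range, smul_eq_mul]
    exact Nat.add_comm _ _
  have hupper : d - j * mm ≤ ∑ t ∈ Finset.Ico (kk - j) kk, t := by
    by_cases hcase : kk ≤ j + 1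
    · have hIco : ∑ t ∈ Finset.Ico (kk - j) kk, t = ∑ t ∈ Finset.range kk, t := by
        rcases Nat.lt_or_ge (kk - j) 1 with h | h
        · have h0 : kk - j = 0 := by omega
          rw [h0, Finset.range_eq_Ico]
        · have h0 : kk - j = 1 := by omega
          rw [h0, Finset.range_eq_Ico,
            ← Finset.sum_Ico_consecutive (fun t => t) (by omega : (0:ℕ) ≤ 1) (by omega)]
          simp
      rw [hIco]
      have hmul : (j + 1) * mm = j * mm + mm := by ring
      have hmul2 : kk * mm ≤ (j + 1) * mm := Nat.mul_le_mul_right mm (by omega)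
      omega
    · have hsum1 : ∑ t ∈ Finset.range (j + 1), t = (∑ t ∈ Finset.range j, t) + j :=
        Finset.sum_range_succ _ _
      have hPj1 : d < (j + 1) * mm + ((∑ t ∈ Finset.range j, t) + j) := by
        have h2 := hnotP (by omega)
        rw [hsum1] at h2
        omega
      have hkey : mm + j ≤ j * (kk - j) + 1 := by
        have hu_def : kk - j - 1 = kk - j - 1 := rfl
        obtain ⟨u, huu, hu⟩ : ∃ u, kk - j = u + 1 ∧ 1 ≤ u := ⟨kk - j - 1, by omega, by omega⟩
        rw [huu, Nat.mul_succ]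
        have e2 : kk - 2 ≤ j * u := by
          rcases Nat.lt_or_ge j 2 with hj2 | hj2
          · have hj' : j = 1 := by omega
            subst hj'
            rw [one_mul]; omega
          · rcases Nat.lt_or_ge u 2 with hu2 | hu2
            · have hu' : u = 1 := by omega
              subst hu'
              rw [Nat.mul_one]; omega
            · have := Nat.add_le_mul hj2 hu2
              omega
        omega
      have hmul : (j + 1) * mm = j * mm + mm := by ring
      rw [hshift]
      omega
  have hlower : (∑ t ∈ Finset.range j, t) ≤ d - j * mm := by omega
  obtain ⟨E, hE, hcard, hsumE⟩ := exists_subset_sum_card kk j (d - j * mm) hjk hlower hupper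
  refine ⟨E, hE, ?_⟩
  rw [Finset.sum_add_distrib, Finset.sum_const, hcard, smul_eq_mul, hsumE]
  omega

/-- Reflected version: realize `d` as `∑_{t ∈ E} (mm + (kk - 1 - t))`. -/
lemma exists_subset_sum_reflect (mm kk d : ℕ) (hm1 : 1 ≤ mm) (hk1 : mm < kk)
    (hd1 : mm ≤ d) (hd2 : d + mm ≤ ∑ t ∈ Finset.range kk, (mm + t)) :
    ∃ E ⊆ Finset.range kk, ∑ t ∈ E, (mm + (kk - 1 - t)) = d := by
  classical
  obtain ⟨E₀, hE₀, hsum₀⟩ := exists_subset_sum_shift mm kk d hm1 hk1 hd1 hd2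
  refine ⟨E₀.image (fun t => kk - 1 - t), ?_, ?_⟩
  · intro x hx
    obtain ⟨t, ht, rfl⟩ := Finset.mem_image.mp hx
    have := Finset.mem_range.mp (hE₀ ht)
    exact Finset.mem_range.mpr (by omega)
  · rw [Finset.sum_image]
    · rw [← hsum₀]
      apply Finset.sum_congr rfl
      intro t ht
      have := Finset.mem_range.mp (hE₀ ht)
      omega
    · intro t1 h1 t2 h2 he
      have := Finset.mem_range.mp (hE₀ h1)
      have := Finset.mem_range.mp (hE₀ h2)
      simp only at he
      omega


structure GFH (m k : ℕ → ℕ) (q a : ℕ → ℝ) : Prop where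
  hm : ∀ n, 2 ≤ m n
  hk : ∀ n, m n < k n
  hq : ∀ n, 0 < q n
  ha0 : a 0 = 0
  ha : ∀ i n, Kf k i < n → n ≤ Kf k (i + 1) →
    a n = ((m i : ℝ) + (Kf k (i + 1) : ℝ) - (n : ℝ)) * q i
  hsum : Summable a
  hGF1 : ∀ n, q n ≤ ((sGF m k (n + 1) : ℝ) - (m (n + 1) : ℝ) + 1) * q (n + 1)
  hGF2 : ∀ n, (∑' i : ℕ, ((sGF m k (n + 1 + i) : ℝ) + (m (n + 1 + i) : ℝ)) * q (n + 1 + i))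
      < (m n : ℝ) * q n

namespace GFH

variable {m k : ℕ → ℕ} {q a : ℕ → ℝ}

lemma Kf_succ (k : ℕ → ℕ) (j : ℕ) : Kf k (j + 1) = Kf k j + k j := rfl

lemma kpos (H : GFH m k q a) (i : ℕ) : 3 ≤ k i :=
  lt_of_le_of_lt (H.hm i) (H.hk i)

lemma Kf_mono (H : GFH m k q a) : StrictMono (Kf k) :=
  strictMono_nat_of_lt_succ (fun n => by rw [Kf_succ]; have := H.kpos n; omega)

lemma Kf_le_self (H : GFH m k q a) (j : ℕ) : j ≤ Kf k j := by
  induction j with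
  | zero => simp
  | succ j ih => rw [Kf_succ]; have := H.kpos j; omega

/-- every `n ≥ 1` lies in a unique block -/
lemma exists_block (H : GFH m k q a) (n : ℕ) (hn : 1 ≤ n) :
    ∃ i, Kf k i < n ∧ n ≤ Kf k (i + 1) := by
  induction n with
  | zero => omega
  | succ n ih =>
    rcases Nat.eq_zero_or_pos n with rfl | hpos
    · exact ⟨0, by simp [Kf], by rw [Kf_succ]; have := H.kpos 0; simp [Kf]; omega⟩
    · obtain ⟨i, h1, h2⟩ := ih hpos
      rcases Nat.lt_or_ge n (Kf k (i + 1)) with h | h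
      · exact ⟨i, by omega, by omega⟩
      · refine ⟨i + 1, by omega, ?_⟩
        rw [Kf_succ]
        have := H.kpos (i + 1)
        omega

lemma block_unique (H : GFH m k q a) {i i' n : ℕ} (h1 : Kf k i < n) (h2 : n ≤ Kf k (i + 1))
    (h3 : Kf k i' < n) (h4 : n ≤ Kf k (i' + 1)) : i = i' := by
  by_contra hne
  rcases Nat.lt_or_ge i i' with h | h
  · have := H.Kf_mono.monotone (show i + 1 ≤ i' from h)
    omega
  · have := H.Kf_mono.monotone (show i' + 1 ≤ i from by omega)
    omega

lemma a_nonneg (H : GFH m k q a) (n : ℕ) : 0 ≤ a n := by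
  rcases Nat.eq_zero_or_pos n with rfl | hn
  · rw [H.ha0]
  · obtain ⟨i, h1, h2⟩ := H.exists_block n hn
    rw [H.ha i n h1 h2]
    have hm := H.hm i
    have : (n : ℝ) ≤ (Kf k (i+1) : ℝ) := Nat.cast_le.mpr h2
    have : (0:ℝ) ≤ (m i : ℝ) := by positivity
    nlinarith [H.hq i]

/-- value of `a` at position `t` inside block `i` -/
lemma a_block (H : GFH m k q a) (i t : ℕ) (ht : t < k i) :
    a (Kf k i + 1 + t) = ((m i + (k i - 1 - t) : ℕ) : ℝ) * q i := by
  have h1 : Kf k i < Kf k i + 1 + t := by omega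
  have h2 : Kf k i + 1 + t ≤ Kf k (i + 1) := by rw [Kf_succ]; omega
  rw [H.ha i _ h1 h2]
  congr 1
  rw [Kf_succ]
  push_cast [show (1:ℕ) ≤ k i from by omega, Nat.cast_sub (show t ≤ k i - 1 from by omega),
    Nat.cast_sub (show 1 ≤ k i from by omega)]
  ring

/-- `sGF + m` is the total block coefficient -/
lemma sGF_add_m (H : GFH m k q a) (i : ℕ) :
    sGF m k i + m i = ∑ t ∈ Finset.range (k i), (m i + t) := by
  have hk1 : k i = (k i - 1) + 1 := by have := H.kpos i; omega
  rw [sGF]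
  conv_rhs => rw [hk1]
  rw [Finset.sum_range_succ']
  simp [Nat.add_assoc]

/-- block sum identity -/
lemma block_sum (H : GFH m k q a) (i : ℕ) :
    ∑ t ∈ Finset.range (k i), a (Kf k i + 1 + t)
      = ((sGF m k i : ℝ) + (m i : ℝ)) * q i := by
  have : ∀ t ∈ Finset.range (k i), a (Kf k i + 1 + t)
      = ((m i + (k i - 1 - t) : ℕ) : ℝ) * q i := fun t ht =>
    H.a_block i t (Finset.mem_range.mp ht)
  rw [Finset.sum_congr rfl this, ← Finset.sum_mul]
  congr 1
  rw [← Nat.cast_sum]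
  have hrefl : ∑ t ∈ Finset.range (k i), (m i + (k i - 1 - t))
      = ∑ t ∈ Finset.range (k i), (m i + t) := by
    exact Finset.sum_range_reflect (fun t => m i + t) (k i)
  rw [hrefl, ← H.sGF_add_m i]
  push_cast
  ring

end GFH

section defs
variable (m k : ℕ → ℕ) (q a : ℕ → ℝ)

noncomputable def bfun (i : ℕ) : ℝ := ((sGF m k i : ℝ) + (m i : ℝ)) * q i
noncomputable def cfun (i : ℕ) : ℝ := ((sGF m k i : ℝ) - (m i : ℝ)) * q i
noncomputable def gfun (j : ℕ) : ℝ := ∑' i, bfun m k q (j + i)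
noncomputable def mufun (j : ℕ) : ℝ := ∑' i, (m (j + i) : ℝ) * q (j + i)
noncomputable def nufun (j : ℕ) : ℝ := ∑' i, (sGF m k (j + i) : ℝ) * q (j + i)
noncomputable def Tfun (j : ℕ) : ℝ := ∑' n, a (Kf k j + 1 + n)

end defs

namespace GFH
variable {m k : ℕ → ℕ} {q a : ℕ → ℝ}

lemma shift_summable {f : ℕ → ℝ} (hf : Summable f) (j : ℕ) :
    Summable (fun i => f (j + i)) := by
  have := (summable_nat_add_iff (f := f) j).mpr hf
  simpa [add_comm] using this

lemma sGF_ge (H : GFH m k q a) (i : ℕ) : 3 * m i ≤ sGF m k i := by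
  have hki := H.hk i
  have hmi := H.hm i
  calc 3 * m i = m i * 3 := Nat.mul_comm _ _
  _ ≤ m i * (m i + 1) := Nat.mul_le_mul (Nat.le_refl _) (by omega)
  _ ≤ (k i - 1) * (m i + 1) := Nat.mul_le_mul (by omega) (Nat.le_refl _)
  _ ≤ ∑ t ∈ Finset.range (k i - 1), (m i + t + 1) := by
      have he : (k i - 1) * (m i + 1) = ∑ _t ∈ Finset.range (k i - 1), (m i + 1) := by
        rw [Finset.sum_const, Finset.card_range, smul_eq_mul, Nat.mul_comm]
      rw [he]
      exact Finset.sum_le_sum (fun t _ => by omega)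
  _ = sGF m k i := rfl

lemma bfun_nonneg (H : GFH m k q a) (i : ℕ) : 0 ≤ bfun m k q i := by
  have := H.hq i
  have : (0:ℝ) ≤ (sGF m k i : ℝ) + m i := by positivity
  exact mul_nonneg this (le_of_lt (H.hq i))

lemma bfun_partial (H : GFH m k q a) (N : ℕ) :
    ∑ i ∈ Finset.range N, bfun m k q i = ∑ n ∈ Finset.Ico 1 (Kf k N + 1), a n := by
  induction N with
  | zero => simp [Kf]
  | succ N ih =>
    rw [Finset.sum_range_succ, ih,
      ← Finset.sum_Ico_consecutive (fun n => a n) (show 1 ≤ Kf k N + 1 by omega)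
        (show Kf k N + 1 ≤ Kf k (N+1) + 1 by rw [Kf_succ]; omega)]
    congr 1
    rw [Finset.sum_Ico_eq_sum_range]
    have hlen : Kf k (N + 1) + 1 - (Kf k N + 1) = k N := by rw [Kf_succ]; omega
    rw [hlen, bfun, ← H.block_sum N]

lemma bfun_summable (H : GFH m k q a) : Summable (bfun m k q) := by
  apply summable_of_sum_range_le (c := ∑' n, a n) (fun i => H.bfun_nonneg i)
  intro N
  rw [H.bfun_partial N]
  exact Summable.sum_le_tsum _ (fun n _ => H.a_nonneg n) H.hsum

lemma mq_summable (H : GFH m k q a) : Summable (fun i => (m i : ℝ) * q i) := by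
  apply Summable.of_nonneg_of_le
    (fun i => mul_nonneg (Nat.cast_nonneg _) (le_of_lt (H.hq i))) _ H.bfun_summable
  intro i
  have h1 : (m i : ℝ) ≤ (sGF m k i : ℝ) + m i := le_add_of_nonneg_left (Nat.cast_nonneg _)
  exact mul_le_mul_of_nonneg_right h1 (le_of_lt (H.hq i))

lemma sq_summable (H : GFH m k q a) : Summable (fun i => (sGF m k i : ℝ) * q i) := by
  apply Summable.of_nonneg_of_le
    (fun i => mul_nonneg (Nat.cast_nonneg _) (le_of_lt (H.hq i))) _ H.bfun_summable
  intro i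
  have h1 : (sGF m k i : ℝ) ≤ (sGF m k i : ℝ) + m i := le_add_of_nonneg_right (Nat.cast_nonneg _)
  exact mul_le_mul_of_nonneg_right h1 (le_of_lt (H.hq i))

lemma cq_eq (i : ℕ) : cfun m k q i = (sGF m k i : ℝ) * q i - (m i : ℝ) * q i := by
  rw [cfun]; ring

lemma cq_summable (H : GFH m k q a) : Summable (cfun m k q) := by
  have := H.sq_summable.sub H.mq_summable
  apply this.congr
  intro i
  rw [cq_eq]

lemma cq_nonneg (H : GFH m k q a) (i : ℕ) : 0 ≤ cfun m k q i := by
  rw [cfun]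
  apply mul_nonneg _ (le_of_lt (H.hq i))
  have h3 := H.sGF_ge i
  have : (3 * m i : ℝ) ≤ (sGF m k i : ℝ) := by exact_mod_cast Nat.cast_le.mpr h3
  push_cast at this ⊢
  nlinarith

/-- recurrence for shifted tsums -/
lemma shift_tsum_rec {f : ℕ → ℝ} (hf : Summable f) (j : ℕ) :
    ∑' i, f (j + i) = f j + ∑' i, f (j + 1 + i) := by
  rw [Summable.tsum_eq_zero_add (shift_summable hf j)]
  have h1 : ∑' i, f (j + (i + 1)) = ∑' i, f (j + 1 + i) :=
    tsum_congr (fun i => by congr 1; omega)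
  rw [h1, Nat.add_zero]

lemma gfun_rec (H : GFH m k q a) (j : ℕ) :
    gfun m k q j = bfun m k q j + gfun m k q (j + 1) :=
  shift_tsum_rec H.bfun_summable j

lemma mufun_rec (H : GFH m k q a) (j : ℕ) :
    mufun m q j = (m j : ℝ) * q j + mufun m q (j + 1) :=
  shift_tsum_rec H.mq_summable j

lemma nufun_rec (H : GFH m k q a) (j : ℕ) :
    nufun m k q j = (sGF m k j : ℝ) * q j + nufun m k q (j + 1) :=
  shift_tsum_rec H.sq_summable j

lemma shift_tsum_tendsto {f : ℕ → ℝ} (hf : Summable f) :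
    Filter.Tendsto (fun j => ∑' i, f (j + i)) Filter.atTop (nhds 0) := by
  have h := tendsto_sum_nat_add f
  apply h.congr
  intro j
  apply tsum_congr
  intro i
  congr 1
  omega

lemma gfun_tendsto (H : GFH m k q a) :
    Filter.Tendsto (gfun m k q) Filter.atTop (nhds 0) := shift_tsum_tendsto H.bfun_summable

lemma mufun_tendsto (H : GFH m k q a) :
    Filter.Tendsto (mufun m q) Filter.atTop (nhds 0) := shift_tsum_tendsto H.mq_summable

lemma nufun_tendsto (H : GFH m k q a) :
    Filter.Tendsto (nufun m k q) Filter.atTop (nhds 0) := shift_tsum_tendsto H.sq_summable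

lemma shift_tsum_nonneg {f : ℕ → ℝ} (hf : Summable f) (h0 : ∀ i, 0 ≤ f i) (j : ℕ) :
    0 ≤ ∑' i, f (j + i) :=
  tsum_nonneg (fun i => h0 _)

lemma mufun_nonneg (H : GFH m k q a) (j : ℕ) : 0 ≤ mufun m q j :=
  tsum_nonneg (fun i => mul_nonneg (Nat.cast_nonneg _) (le_of_lt (H.hq _)))

/-- Tfun recurrence -/
lemma Tfun_rec (H : GFH m k q a) (j : ℕ) :
    Tfun k a j = bfun m k q j + Tfun k a (j + 1) := by
  have hsummG : Summable (fun n => a (Kf k j + 1 + n)) := by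
    have := shift_summable H.hsum (Kf k j + 1)
    exact this
  rw [Tfun, ← Summable.sum_add_tsum_nat_add (k j) hsummG]
  congr 1
  · rw [bfun]; exact H.block_sum j
  · rw [Tfun]
    apply tsum_congr
    intro n
    congr 1
    rw [Kf_succ]
    omega

lemma q_tendsto (H : GFH m k q a) : Filter.Tendsto q Filter.atTop (nhds 0) := by
  have hb : Filter.Tendsto (bfun m k q) Filter.atTop (nhds 0) := H.bfun_summable.tendsto_atTop_zero
  apply squeeze_zero (fun i => le_of_lt (H.hq i)) _ hb
  intro i
  rw [bfun]
  nth_rewrite 1 [show q i = 1 * q i by ring]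
  apply mul_le_mul_of_nonneg_right _ (le_of_lt (H.hq i))
  have h1 := H.hm i
  have : (2:ℝ) ≤ (m i : ℝ) := by exact_mod_cast h1
  have : (0:ℝ) ≤ (sGF m k i : ℝ) := Nat.cast_nonneg _
  linarith

lemma Tfun_tendsto (H : GFH m k q a) :
    Filter.Tendsto (Tfun k a) Filter.atTop (nhds 0) := by
  have h1 : Filter.Tendsto (fun N => ∑' n, a (N + n)) Filter.atTop (nhds 0) :=
    shift_tsum_tendsto H.hsum
  have h2 : Filter.Tendsto (fun j => Kf k j + 1) Filter.atTop Filter.atTop :=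
    Filter.tendsto_atTop_mono (fun j => by have := H.Kf_le_self j; simp; omega) Filter.tendsto_id
  exact h1.comp h2

/-- T = g : the tail of the series equals the sum of the block sums -/
lemma Tfun_eq_gfun (H : GFH m k q a) (j : ℕ) : Tfun k a j = gfun m k q j := by
  have hdiff : ∀ N, Tfun k a j - gfun m k q j = Tfun k a (j + N) - gfun m k q (j + N) := by
    intro N
    induction N with
    | zero => rfl
    | succ N ih =>
      rw [ih, H.Tfun_rec (j + N), H.gfun_rec (j + N), show j + (N+1) = (j+N)+1 from by omega]
      ring
  have hlim : Filter.Tendsto (fun N => Tfun k a (j + N) - gfun m k q (j + N))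
      Filter.atTop (nhds 0) := by
    have hshift : Filter.Tendsto (fun N => j + N) Filter.atTop Filter.atTop :=
      Filter.tendsto_atTop_mono (fun n => Nat.le_add_left n j) Filter.tendsto_id
    have h1 := H.Tfun_tendsto.comp hshift
    have h2 := H.gfun_tendsto.comp hshift
    simpa using h1.sub h2
  have : Filter.Tendsto (fun _ : ℕ => Tfun k a j - gfun m k q j) Filter.atTop (nhds 0) := by
    apply hlim.congr
    intro N
    exact (hdiff N).symm
  have := tendsto_nhds_unique this tendsto_const_nhds
  linarith

lemma nu_sub_mu (H : GFH m k q a) (j : ℕ) :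
    nufun m k q j - mufun m q j = ∑' i, cfun m k q (j + i) := by
  rw [nufun, mufun, ← Summable.tsum_sub (shift_summable H.sq_summable j) (shift_summable H.mq_summable j)]
  apply tsum_congr
  intro i
  rw [cq_eq]

lemma gf1_step (H : GFH m k q a) (l : ℕ) : q l ≤ cfun m k q (l + 1) + q (l + 1) := by
  have h := H.hGF1 l
  rw [cfun]
  nlinarith [H.hq (l + 1)]

lemma window (H : GFH m k q a) (i : ℕ) :
    q i ≤ nufun m k q (i + 1) - mufun m q (i + 1) := by
  rw [H.nu_sub_mu (i + 1)]
  have key : ∀ N, q i ≤ (∑ n ∈ Finset.range N, cfun m k q (i + 1 + n)) + q (i + N) := by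
    intro N
    induction N with
    | zero => simp
    | succ N ih =>
      have hstep := H.gf1_step (i + N)
      rw [Finset.sum_range_succ]
      have : i + N + 1 = i + (N + 1) := by omega
      rw [this] at hstep
      have harg : i + 1 + N = i + (N + 1) := by omega
      rw [harg]
      linarith
  have hlim : Filter.Tendsto
      (fun N => (∑ n ∈ Finset.range N, cfun m k q (i + 1 + n)) + q (i + N))
      Filter.atTop (nhds (∑' n, cfun m k q (i + 1 + n))) := by
    have h1 := (shift_summable H.cq_summable (i + 1)).hasSum.tendsto_sum_nat
    have hshift : Filter.Tendsto (fun N => i + N) Filter.atTop Filter.atTop :=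
      Filter.tendsto_atTop_mono (fun n => Nat.le_add_left n i) Filter.tendsto_id
    have h2 := H.q_tendsto.comp hshift
    simpa using h1.add h2
  exact ge_of_tendsto hlim (Filter.Eventually.of_forall key)

lemma nu_sub_mu_ge (H : GFH m k q a) (j : ℕ) :
    cfun m k q j ≤ nufun m k q j - mufun m q j := by
  rw [H.nu_sub_mu j]
  have := Summable.le_tsum (shift_summable H.cq_summable j) 0 (fun i _ => H.cq_nonneg (j + i))
  simpa using this

lemma gfun_eq_GF2sum (j : ℕ) :
    gfun m k q (j + 1) = ∑' i, ((sGF m k (j + 1 + i) : ℝ) + (m (j + 1 + i) : ℝ)) * q (j + 1 + i) :=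
  tsum_congr (fun i => rfl)

lemma Tfun_tail_lt (H : GFH m k q a) (j : ℕ) : Tfun k a (j + 1) < (m j : ℝ) * q j := by
  rw [H.Tfun_eq_gfun, gfun_eq_GF2sum]
  exact H.hGF2 j

lemma Tfun_le (H : GFH m k q a) (j : ℕ) :
    Tfun k a j ≤ ((sGF m k j : ℝ) + 2 * (m j : ℝ)) * q j := by
  have h1 := H.Tfun_rec j
  have h2 := H.Tfun_tail_lt j
  rw [h1, bfun]
  nlinarith

lemma Tfun_pos (H : GFH m k q a) (j : ℕ) : 0 < Tfun k a j := by
  rw [H.Tfun_eq_gfun, H.gfun_rec j]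
  have h1 : 0 < bfun m k q j := by
    rw [bfun]
    apply mul_pos _ (H.hq j)
    have := H.hm j
    have h2 : (2:ℝ) ≤ (m j : ℝ) := by exact_mod_cast this
    have h3 : (0:ℝ) ≤ (sGF m k j : ℝ) := Nat.cast_nonneg _
    linarith
  have h2 : 0 ≤ gfun m k q (j + 1) := tsum_nonneg (fun i => H.bfun_nonneg _)
  linarith

lemma nufun_le_Tfun (H : GFH m k q a) (j : ℕ) : nufun m k q j ≤ Tfun k a j := by
  rw [H.Tfun_eq_gfun]
  apply Summable.tsum_le_tsum _ (shift_summable H.sq_summable j) (shift_summable H.bfun_summable j)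
  intro i
  rw [bfun]
  have h1 : (sGF m k (j+i) : ℝ) ≤ (sGF m k (j+i) : ℝ) + m (j+i) :=
    le_add_of_nonneg_right (Nat.cast_nonneg _)
  exact mul_le_mul_of_nonneg_right h1 (le_of_lt (H.hq _))

lemma sGF_ge_real (H : GFH m k q a) (j : ℕ) : 3 * (m j : ℝ) ≤ (sGF m k j : ℝ) := by
  have := H.sGF_ge j
  exact_mod_cast this

lemma ratio (H : GFH m k q a) (j : ℕ) :
    (2 / 5) * Tfun k a j ≤ nufun m k q j - mufun m q j := by
  have h1 := H.nu_sub_mu_ge j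
  have h2 := H.Tfun_le j
  have h3 := H.sGF_ge_real j
  have h4 := H.hq j
  rw [cfun] at h1
  nlinarith

lemma mufun_le_nufun (H : GFH m k q a) (j : ℕ) : mufun m q j ≤ nufun m k q j := by
  apply Summable.tsum_le_tsum _ (shift_summable H.mq_summable j) (shift_summable H.sq_summable j)
  intro i
  have h3 := H.sGF_ge_real (j + i)
  have h2 : (0:ℝ) ≤ (m (j+i) : ℝ) := Nat.cast_nonneg _
  apply mul_le_mul_of_nonneg_right _ (le_of_lt (H.hq _))
  linarith

end GFH

section greedydefs
variable (m k : ℕ → ℕ) (q : ℕ → ℝ)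

noncomputable def dig (i : ℕ) (x : ℝ) : ℕ :=
  max (m i) ⌈(x - nufun m k q (i + 1)) / q i⌉₊

noncomputable def rem (j : ℕ) (t : ℝ) : ℕ → ℝ
  | 0 => t
  | n + 1 => rem j t n - (dig m k q (j + n) (rem j t n) : ℝ) * q (j + n)

end greedydefs

namespace GFH
variable {m k : ℕ → ℕ} {q a : ℕ → ℝ}

lemma dig_step (H : GFH m k q a) (i : ℕ) (x : ℝ)
    (hx : x ∈ Set.Icc (mufun m q i) (nufun m k q i)) :
    m i ≤ dig m k q i x ∧ dig m k q i x ≤ sGF m k i ∧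
      x - (dig m k q i x : ℝ) * q i ∈
        Set.Icc (mufun m q (i + 1)) (nufun m k q (i + 1)) := by
  obtain ⟨hx1, hx2⟩ := hx
  have hqi := H.hq i
  set L := x - nufun m k q (i + 1) with hLdef
  set R := x - mufun m q (i + 1) with hRdef
  have hR : (m i : ℝ) * q i ≤ R := by
    have := H.mufun_rec i
    rw [hRdef]
    linarith
  have hL : L ≤ (sGF m k i : ℝ) * q i := by
    have := H.nufun_rec i
    rw [hLdef]
    linarith
  have hwin : q i ≤ R - L := by
    have := H.window i
    rw [hRdef, hLdef]
    linarith
  set d := dig m k q i x with hddef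
  have hd1 : m i ≤ d := le_max_left _ _
  have hdL : L ≤ (d : ℝ) * q i := by
    have hceil : (⌈L / q i⌉₊ : ℝ) ≤ (d : ℝ) := by
      exact_mod_cast Nat.cast_le.mpr (le_max_right (m i) _)
    have h2 : L / q i ≤ (⌈L / q i⌉₊ : ℝ) := Nat.le_ceil _
    have h3 : L / q i ≤ (d : ℝ) := le_trans h2 hceil
    calc L = (L / q i) * q i := by field_simp
    _ ≤ (d : ℝ) * q i := mul_le_mul_of_nonneg_right h3 (le_of_lt hqi)
  have hdR : (d : ℝ) * q i ≤ R := by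
    rcases Nat.le_total ⌈L / q i⌉₊ (m i) with hcase | hcase
    · have hde : d = m i := max_eq_left hcase
      rw [hde]
      exact hR
    · have hde : d = ⌈L / q i⌉₊ := max_eq_right hcase
      rcases le_or_gt (⌈L / q i⌉₊ : ℕ) 0 with h0 | h0
      · exfalso
        have hd0 : d = 0 := by rw [hde]; omega
        have hm2 := H.hm i
        omega
      · have hLpos : 0 < L / q i := Nat.ceil_pos.mp h0
        have h2 : (⌈L / q i⌉₊ : ℝ) < L / q i + 1 := Nat.ceil_lt_add_one (le_of_lt hLpos)
        have h3 : (d : ℝ) * q i < (L / q i + 1) * q i := by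
          rw [hde]
          exact mul_lt_mul_of_pos_right h2 hqi
        have h4 : (L / q i + 1) * q i = L + q i := by field_simp
        linarith
  have hd2 : d ≤ sGF m k i := by
    have hms : m i ≤ sGF m k i := le_trans (by omega) (H.sGF_ge i)
    have hceil : ⌈L / q i⌉₊ ≤ sGF m k i := by
      rw [Nat.ceil_le]
      rw [div_le_iff₀ hqi]
      exact hL
    exact max_le hms hceil
  refine ⟨hd1, hd2, Set.mem_Icc.mpr ⟨?_, ?_⟩⟩
  · rw [hRdef] at hdR
    linarith
  · rw [hLdef] at hdL
    linarith

lemma rem_invariant (H : GFH m k q a) (j : ℕ) (t : ℝ)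
    (ht : t ∈ Set.Icc (mufun m q j) (nufun m k q j)) :
    ∀ n, rem m k q j t n ∈ Set.Icc (mufun m q (j + n)) (nufun m k q (j + n)) := by
  intro n
  induction n with
  | zero => exact ht
  | succ n ih =>
    have hstep := (H.dig_step (j + n) (rem m k q j t n) ih).2.2
    have : j + (n + 1) = (j + n) + 1 := by omega
    rw [this]
    exact hstep

lemma rem_partial (j : ℕ) (t : ℝ) (n : ℕ) :
    rem m k q j t n = t - ∑ l ∈ Finset.range n,
      (dig m k q (j + l) (rem m k q j t l) : ℝ) * q (j + l) := by
  induction n with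
  | zero => simp [rem]
  | succ n ih =>
    rw [Finset.sum_range_succ, show rem m k q j t (n+1)
      = rem m k q j t n - (dig m k q (j + n) (rem m k q j t n) : ℝ) * q (j + n) from rfl, ih]
    ring

lemma rem_tendsto (H : GFH m k q a) (j : ℕ) (t : ℝ)
    (ht : t ∈ Set.Icc (mufun m q j) (nufun m k q j)) :
    Filter.Tendsto (fun n => rem m k q j t n) Filter.atTop (nhds 0) := by
  have hshift : Filter.Tendsto (fun N : ℕ => j + N) Filter.atTop Filter.atTop :=
    Filter.tendsto_atTop_mono (fun n => Nat.le_add_left n j) Filter.tendsto_id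
  have hlow : Filter.Tendsto (fun n => mufun m q (j + n)) Filter.atTop (nhds 0) :=
    H.mufun_tendsto.comp hshift
  have hhigh : Filter.Tendsto (fun n => nufun m k q (j + n)) Filter.atTop (nhds 0) :=
    H.nufun_tendsto.comp hshift
  exact tendsto_of_tendsto_of_tendsto_of_le_of_le hlow hhigh
    (fun n => (H.rem_invariant j t ht n).1) (fun n => (H.rem_invariant j t ht n).2)

/-- The central interval of the tail achievement set: every point of
`[mufun j, nufun j]` is the sum of a subseries supported beyond `Kf k j`. -/
lemma interval_subset (H : GFH m k q a) (j : ℕ) (t : ℝ)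
    (ht : t ∈ Set.Icc (mufun m q j) (nufun m k q j)) :
    ∃ I : Set ℕ, (∀ nn ∈ I, Kf k j < nn) ∧ HasSum (Set.indicator I a) t := by
  classical
  set D : ℕ → ℕ := fun n => dig m k q (j + n) (rem m k q j t n) with hD
  have hDbound : ∀ n, m (j + n) ≤ D n ∧ D n ≤ sGF m k (j + n) := by
    intro n
    obtain ⟨h1, h2, _⟩ := H.dig_step (j + n) (rem m k q j t n) (H.rem_invariant j t ht n)
    exact ⟨h1, h2⟩
  have hreal : ∀ n, ∃ E ⊆ Finset.range (k (j + n)),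
      ∑ c ∈ E, (m (j + n) + (k (j + n) - 1 - c)) = D n := by
    intro n
    apply exists_subset_sum_reflect (m (j + n)) (k (j + n)) (D n)
      (by have := H.hm (j + n); omega) (H.hk (j + n)) (hDbound n).1
    rw [← H.sGF_add_m (j + n)]
    have := (hDbound n).2
    omega
  choose E hEsub hEsum using hreal
  set I : Set ℕ := {nn | ∃ n, ∃ e ∈ E n, nn = Kf k (j + n) + 1 + e} with hI
  have hIgt : ∀ nn ∈ I, Kf k j < nn := by
    rintro nn ⟨n, e, he, rfl⟩
    have : Kf k j ≤ Kf k (j + n) := H.Kf_mono.monotone (by omega)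
    omega
  -- membership characterization inside a block
  have hmem : ∀ n c, c < k (j + n) → ((Kf k (j + n) + 1 + c ∈ I) ↔ c ∈ E n) := by
    intro n c hc
    constructor
    · rintro ⟨n', e', he', heq⟩
      have he'r : e' < k (j + n') := Finset.mem_range.mp (hEsub n' he')
      have hb1 : Kf k (j + n) < Kf k (j + n) + 1 + c := by omega
      have hb2 : Kf k (j + n) + 1 + c ≤ Kf k (j + n + 1) := by rw [Kf_succ]; omega
      have hb3 : Kf k (j + n') < Kf k (j + n) + 1 + c := by omega
      have hb4 : Kf k (j + n) + 1 + c ≤ Kf k (j + n' + 1) := by rw [heq, Kf_succ]; omega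
      have hnn : j + n = j + n' := H.block_unique hb1 hb2 hb3 hb4
      have : n = n' := by omega
      subst this
      have : c = e' := by omega
      rwa [this]
    · intro hc'
      exact ⟨n, c, hc', rfl⟩
  -- sum over one block
  have hblock : ∀ n, ∑ x ∈ Finset.Ico (Kf k (j + n) + 1) (Kf k (j + n + 1) + 1),
      Set.indicator I a x = (D n : ℝ) * q (j + n) := by
    intro n
    rw [Finset.sum_Ico_eq_sum_range]
    have hlen : Kf k (j + n + 1) + 1 - (Kf k (j + n) + 1) = k (j + n) := by
      rw [Kf_succ]; omega
    rw [hlen]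
    have hpt : ∀ c ∈ Finset.range (k (j + n)), Set.indicator I a (Kf k (j + n) + 1 + c)
        = if c ∈ E n then a (Kf k (j + n) + 1 + c) else 0 := by
      intro c hcr
      have hc := Finset.mem_range.mp hcr
      by_cases hcE : c ∈ E n
      · rw [if_pos hcE]
        exact Set.indicator_of_mem ((hmem n c hc).mpr hcE) a
      · rw [if_neg hcE]
        exact Set.indicator_of_notMem (fun hmemI => hcE ((hmem n c hc).mp hmemI)) a
    rw [Finset.sum_congr rfl hpt, Finset.sum_ite_mem, Finset.inter_eq_right.mpr (hEsub n)]
    have hval : ∀ c ∈ E n, a (Kf k (j + n) + 1 + c)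
        = ((m (j + n) + (k (j + n) - 1 - c) : ℕ) : ℝ) * q (j + n) := fun c hcE =>
      H.a_block (j + n) c (Finset.mem_range.mp (hEsub n hcE))
    rw [Finset.sum_congr rfl hval, ← Finset.sum_mul, ← Nat.cast_sum, hEsum n]
  -- prefix sums
  have hprefix : ∀ N, ∑ x ∈ Finset.range (Kf k (j + N) + 1), Set.indicator I a x
      = ∑ n ∈ Finset.range N, (D n : ℝ) * q (j + n) := by
    intro N
    induction N with
    | zero =>
      simp only [Finset.range_zero, Finset.sum_empty, Nat.add_zero]
      apply Finset.sum_eq_zero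
      intro x hx
      have hxr := Finset.mem_range.mp hx
      apply Set.indicator_of_notMem
      intro hxI
      have := hIgt x hxI
      omega
    | succ N ih =>
      have hco := Finset.sum_Ico_consecutive (fun x => Set.indicator I a x)
        (show 0 ≤ Kf k (j + N) + 1 by omega)
        (show Kf k (j + N) + 1 ≤ Kf k (j + N + 1) + 1 by rw [Kf_succ]; omega)
      conv_rhs => rw [Finset.sum_range_succ]
      rw [show (Finset.range (Kf k (j + (N + 1)) + 1)) = Finset.Ico 0 (Kf k (j + N + 1) + 1)
        from by rw [Finset.range_eq_Ico]; rfl]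
      rw [← hco, ← Finset.range_eq_Ico, ih, hblock N]
  -- summability
  have hindsum : Summable (Set.indicator I a) := by
    apply Summable.of_nonneg_of_le _ _ H.hsum
    · intro n
      exact Set.indicator_nonneg (fun x _ => H.a_nonneg x) n
    · intro n
      exact Set.indicator_le_self' (fun x _ => H.a_nonneg x) n
  have hhs := hindsum.hasSum
  have hpart := hhs.tendsto_sum_nat
  have hsub : Filter.Tendsto (fun N => Kf k (j + N) + 1) Filter.atTop Filter.atTop := by
    apply Filter.tendsto_atTop_mono (fun N => ?_) Filter.tendsto_id
    have h1 := H.Kf_le_self (j + N)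
    simp only [id]
    omega
  have hcomp := hpart.comp hsub
  have hcomp' : Filter.Tendsto (fun N => ∑ n ∈ Finset.range N, (D n : ℝ) * q (j + n))
      Filter.atTop (nhds (∑' n, Set.indicator I a n)) := by
    apply hcomp.congr
    intro N
    exact hprefix N
  have hcomp'' : Filter.Tendsto (fun N => ∑ n ∈ Finset.range N, (D n : ℝ) * q (j + n))
      Filter.atTop (nhds t) := by
    have h1 : ∀ N, ∑ n ∈ Finset.range N, (D n : ℝ) * q (j + n) = t - rem m k q j t N := by
      intro N
      rw [rem_partial]
      ring
    have h2 : Filter.Tendsto (fun N => t - rem m k q j t N) Filter.atTop (nhds (t - 0)) :=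
      tendsto_const_nhds.sub (H.rem_tendsto j t ht)
    rw [sub_zero] at h2
    exact h2.congr (fun N => (h1 N).symm)
  have : (∑' n, Set.indicator I a n) = t := tendsto_nhds_unique hcomp' hcomp''
  exact ⟨I, hIgt, this ▸ hhs⟩

end GFH

namespace GFH
variable {m k : ℕ → ℕ} {q a : ℕ → ℝ}

/-- tail indicator has sum Tfun -/
lemma tail_hasSum (H : GFH m k q a) (j : ℕ) :
    HasSum (Set.indicator {n | Kf k j < n} a) (Tfun k a j) := by
  classical
  set tf := Set.indicator {n | Kf k j < n} a with htf
  have hsummtf : Summable tf := by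
    apply Summable.of_nonneg_of_le _ _ H.hsum
    · exact fun n => Set.indicator_nonneg (fun x _ => H.a_nonneg x) n
    · exact fun n => Set.indicator_le_self' (fun x _ => H.a_nonneg x) n
  have htsum : ∑' n, tf n = Tfun k a j := by
    rw [← Summable.sum_add_tsum_nat_add (Kf k j + 1) hsummtf]
    have h1 : ∑ n ∈ Finset.range (Kf k j + 1), tf n = 0 := by
      apply Finset.sum_eq_zero
      intro n hn
      have := Finset.mem_range.mp hn
      exact Set.indicator_of_notMem (by simp only [Set.mem_setOf_eq]; omega) a
    rw [h1, zero_add, Tfun]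
    apply tsum_congr
    intro n
    have : tf (n + (Kf k j + 1)) = a (n + (Kf k j + 1)) :=
      Set.indicator_of_mem (by simp only [Set.mem_setOf_eq]; omega) a
    rw [this]
    congr 1
    omega
  exact htsum ▸ hsummtf.hasSum

/-- splitting lemma : every point of the achievement set is within `Tfun j` above a
finite subsum `f`, and `f +` the central interval is contained in the achievement set -/
lemma split (H : GFH m k q a) {x : ℝ} (hx : x ∈ achievementSet a) (j : ℕ) :
    ∃ f : ℝ, x ∈ Set.Icc f (f + Tfun k a j) ∧
      ∀ t ∈ Set.Icc (mufun m q j) (nufun m k q j), f + t ∈ achievementSet a := by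
  classical
  obtain ⟨I, hI⟩ := hx
  have hind : HasSum (Set.indicator I a) x := hasSum_subtype_iff_indicator.mp hI
  set I₁ : Set ℕ := I ∩ {n | n ≤ Kf k j} with hI₁
  set I₂ : Set ℕ := I ∩ {n | Kf k j < n} with hI₂
  have hpoint : ∀ n, Set.indicator I a n = Set.indicator I₁ a n + Set.indicator I₂ a n := by
    intro n
    by_cases h1 : n ∈ I
    · by_cases h2 : n ≤ Kf k j
      · have e1 : n ∈ I₁ := ⟨h1, h2⟩
        have e2 : n ∉ I₂ := fun h => by
          have := h.2; simp only [Set.mem_setOf_eq] at this; omega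
        rw [Set.indicator_of_mem h1, Set.indicator_of_mem e1, Set.indicator_of_notMem e2,
          add_zero]
      · have e1 : n ∉ I₁ := fun h => h2 h.2
        have e2 : n ∈ I₂ := ⟨h1, by simp only [Set.mem_setOf_eq]; omega⟩
        rw [Set.indicator_of_mem h1, Set.indicator_of_notMem e1, Set.indicator_of_mem e2,
          zero_add]
    · have e1 : n ∉ I₁ := fun h => h1 h.1
      have e2 : n ∉ I₂ := fun h => h1 h.1
      rw [Set.indicator_of_notMem h1, Set.indicator_of_notMem e1,
        Set.indicator_of_notMem e2, add_zero]
  set f : ℝ := ∑ n ∈ Finset.range (Kf k j + 1), Set.indicator I₁ a n with hf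
  have hfin : HasSum (Set.indicator I₁ a) f := by
    apply hasSum_sum_of_ne_finset_zero
    intro b hb
    apply Set.indicator_of_notMem
    intro hbI
    apply hb
    have := hbI.2
    simp only [Set.mem_setOf_eq] at this
    exact Finset.mem_range.mpr (by omega)
  have h2 : HasSum (Set.indicator I₂ a) (x - f) := by
    have hsub := hind.sub hfin
    have heq : (fun n => Set.indicator I a n - Set.indicator I₁ a n) = Set.indicator I₂ a :=
      funext (fun n => by rw [hpoint n]; ring)
    rwa [heq] at hsub
  have h0y : 0 ≤ x - f :=
    hasSum_le (fun n => Set.indicator_nonneg (fun i _ => H.a_nonneg i) n) hasSum_zero h2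
  have hyT : x - f ≤ Tfun k a j := by
    apply hasSum_le _ h2 (H.tail_hasSum j)
    intro n
    apply Set.indicator_le_indicator_of_subset (Set.inter_subset_right) (fun i => H.a_nonneg i)
  refine ⟨f, ⟨by linarith, by linarith⟩, ?_⟩
  intro t ht
  obtain ⟨I₃, hI₃gt, hI₃sum⟩ := H.interval_subset j t ht
  have hdisj : Disjoint I₁ I₃ := by
    rw [Set.disjoint_left]
    intro n hn hn3
    have := hI₃gt n hn3
    have := hn.2
    simp only [Set.mem_setOf_eq] at this
    omega
  have hunion : Set.indicator (I₁ ∪ I₃) a = fun n => Set.indicator I₁ a n + Set.indicator I₃ a n :=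
    Set.indicator_union_of_disjoint hdisj a
  have hsum13 : HasSum (Set.indicator (I₁ ∪ I₃) a) (f + t) := by
    rw [hunion]
    exact hfin.add hI₃sum
  exact ⟨I₁ ∪ I₃, hasSum_subtype_iff_indicator.mpr hsum13⟩

lemma isClosed_achievementSet (H : GFH m k q a) : IsClosed (achievementSet a) := by
  classical
  set g : (ℕ → Bool) → ℝ := fun σ => ∑' n, if σ n then a n else 0 with hg
  have hsummσ : ∀ σ : ℕ → Bool, Summable (fun n => if σ n then a n else 0) := by
    intro σ
    apply Summable.of_nonneg_of_le _ _ H.hsum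
    · intro n; split <;> simp [H.a_nonneg n]
    · intro n; split
      · exact le_refl _
      · exact H.a_nonneg n
  have hcont : Continuous g := by
    apply continuous_tsum (u := fun n => |a n|) _ H.hsum.abs
    · intro n σ
      simp only [Real.norm_eq_abs]
      split
      · exact le_refl _
      · simp
    · intro n
      have : (fun σ : ℕ → Bool => if σ n then a n else 0)
          = (fun b : Bool => if b then a n else 0) ∘ (fun σ => σ n) := rfl
      rw [this]
      exact (continuous_of_discreteTopology).comp (continuous_apply n)
  have hrange : achievementSet a = Set.range g := by
    ext x
    constructor
    · rintro ⟨I, hI⟩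
      refine ⟨fun n => decide (n ∈ I), ?_⟩
      have hind := hasSum_subtype_iff_indicator.mp hI
      have heq : (fun n => if (decide (n ∈ I) : Bool) then a n else 0) = Set.indicator I a := by
        funext n
        by_cases h : n ∈ I <;> simp [Set.indicator_apply, h]
      rw [hg]
      simp only [heq]
      exact hind.tsum_eq
    · rintro ⟨σ, rfl⟩
      refine ⟨{n | σ n = true}, ?_⟩
      have heq : Set.indicator {n | σ n = true} a = fun n => if σ n then a n else 0 := by
        funext n
        by_cases h : σ n = true <;> simp [Set.indicator_apply, h]
      have h1 : HasSum (Set.indicator {n | σ n = true} a) (g σ) := by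
        rw [heq]
        exact (hsummσ σ).hasSum
      exact hasSum_subtype_iff_indicator.mpr h1
  rw [hrange]
  exact (isCompact_range hcont).isClosed

open MeasureTheory

theorem main (H : GFH m k q a) :
    volume (achievementSet a) = volume (interior (achievementSet a)) := by
  classical
  set A := achievementSet a with hA
  have hAclosed : IsClosed A := H.isClosed_achievementSet
  set B := A \ interior A with hB
  have hBmeas : MeasurableSet B := hAclosed.measurableSet.diff isOpen_interior.measurableSet
  have hB0 : volume B = 0 := by
    by_contra hB0
    have hres : volume.restrict B ≠ 0 := by
      intro h0
      apply hB0
      rw [← Measure.restrict_apply_univ B, h0]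
      simp
    have hne : Filter.NeBot (ae (volume.restrict B)) := ae_neBot.mpr hres
    have hae := Besicovitch.ae_tendsto_measure_inter_div volume B
    have haeB : ∀ᵐ x ∂volume.restrict B, x ∈ B := ae_restrict_mem hBmeas
    obtain ⟨x, hxtend, hxB⟩ := (hae.and haeB).exists
    have hxA : x ∈ A := hxB.1
    have hseq : Filter.Tendsto (fun j => Tfun k a j) Filter.atTop (nhdsWithin 0 (Set.Ioi 0)) :=
      tendsto_nhdsWithin_of_tendsto_nhds_of_eventually_within _ H.Tfun_tendsto
        (Filter.Eventually.of_forall fun j => H.Tfun_pos j)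
    have hcomp := hxtend.comp hseq
    have hub : ∀ j, volume (B ∩ Metric.closedBall x (Tfun k a j))
        / volume (Metric.closedBall x (Tfun k a j)) ≤ ENNReal.ofReal (4/5) := by
      intro j
      set T := Tfun k a j with hT
      have hTpos := H.Tfun_pos j
      obtain ⟨f, hxIcc, hfsub⟩ := H.split hxA j
      set J := Set.Ioo (f + mufun m q j) (f + nufun m k q j) with hJ
      have hJA : J ⊆ A := by
        intro z hz
        have h1 : z - f ∈ Set.Icc (mufun m q j) (nufun m k q j) :=
          ⟨by linarith [hz.1], by linarith [hz.2]⟩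
        have := hfsub (z - f) h1
        simpa using this
      have hJint : J ⊆ interior A := interior_maximal hJA isOpen_Ioo
      have hJball : J ⊆ Metric.closedBall x T := by
        intro z hz
        rw [Metric.mem_closedBall, Real.dist_eq, abs_le]
        have hmu0 : 0 ≤ mufun m q j := H.mufun_nonneg j
        have hnuT : nufun m k q j ≤ T := H.nufun_le_Tfun j
        have hxl := hxIcc.1
        have hxr := hxIcc.2
        constructor <;> [nlinarith [hz.1, hz.2]; nlinarith [hz.1, hz.2]]
      have hsubset : B ∩ Metric.closedBall x T ⊆ Metric.closedBall x T \ J := by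
        intro z hz
        exact ⟨hz.2, fun hzJ => hz.1.2 (hJint hzJ)⟩
      have hratio := H.ratio j
      have hmunu : mufun m q j ≤ nufun m k q j := H.mufun_le_nufun j
      have hle1 : volume (B ∩ Metric.closedBall x T) ≤ ENNReal.ofReal ((8/5) * T) := by
        calc volume (B ∩ Metric.closedBall x T) ≤ volume (Metric.closedBall x T \ J) :=
          measure_mono hsubset
        _ = volume (Metric.closedBall x T) - volume J := by
          apply measure_diff hJball measurableSet_Ioo.nullMeasurableSet
          rw [hJ, Real.volume_Ioo]
          exact ENNReal.ofReal_ne_top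
        _ = ENNReal.ofReal (2 * T) - ENNReal.ofReal (nufun m k q j - mufun m q j) := by
          rw [Real.volume_closedBall, hJ, Real.volume_Ioo,
            show f + nufun m k q j - (f + mufun m q j)
              = nufun m k q j - mufun m q j from by ring]
        _ ≤ ENNReal.ofReal (2 * T - (nufun m k q j - mufun m q j)) := by
          rw [ENNReal.ofReal_sub _ (show (0:ℝ) ≤ nufun m k q j - mufun m q j by linarith)]
        _ ≤ ENNReal.ofReal ((8/5) * T) := by
          apply ENNReal.ofReal_le_ofReal
          linarith
      calc volume (B ∩ Metric.closedBall x T) / volume (Metric.closedBall x T)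
          ≤ ENNReal.ofReal ((8/5) * T) / ENNReal.ofReal (2 * T) := by
            apply ENNReal.div_le_div hle1
            rw [Real.volume_closedBall]
      _ ≤ ENNReal.ofReal (4/5) := by
          apply ENNReal.div_le_of_le_mul
          rw [← ENNReal.ofReal_mul (by norm_num)]
          apply ENNReal.ofReal_le_ofReal
          nlinarith
    have hle := le_of_tendsto hcomp (Filter.Eventually.of_forall hub)
    have hlt : ENNReal.ofReal (4/5) < 1 := by
      rw [← ENNReal.ofReal_one]
      exact (ENNReal.ofReal_lt_ofReal_iff (by norm_num)).mpr (by norm_num)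
    exact absurd (lt_of_le_of_lt hle hlt) (lt_irrefl _)
  have hABsub : A ⊆ interior A ∪ B := by
    intro z hz
    by_cases h : z ∈ interior A
    · exact Or.inl h
    · exact Or.inr ⟨hz, h⟩
  have h1 : volume A ≤ volume (interior A) := by
    calc volume A ≤ volume (interior A ∪ B) := measure_mono hABsub
      _ ≤ volume (interior A) + volume B := measure_union_le _ _
      _ = volume (interior A) := by rw [hB0, add_zero]
  exact le_antisymm h1 (measure_mono interior_subset)

end GFH

end GFaux

/-- For a convergent generalized Ferens series satisfying (GF1) and
(GF2), the Lebesgue measure of the achievement set equals that of its interior. -/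
theorem stmt_7 (m k : ℕ → ℕ) (q : ℕ → ℝ) (a : ℕ → ℝ)
    (hm : ∀ n, 2 ≤ m n) (hk : ∀ n, m n < k n) (hq : ∀ n, 0 < q n)
    (ha0 : a 0 = 0)
    (ha : ∀ i n, Kf k i < n → n ≤ Kf k (i + 1) →
      a n = ((m i : ℝ) + (Kf k (i + 1) : ℝ) - (n : ℝ)) * q i)
    (hsum : Summable a)
    (hGF1 : ∀ n, q n ≤ ((sGF m k (n + 1) : ℝ) - (m (n + 1) : ℝ) + 1) * q (n + 1))
    (hGF2 : ∀ n, (∑' i : ℕ, ((sGF m k (n + 1 + i) : ℝ) + (m (n + 1 + i) : ℝ)) * q (n + 1 + i))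
      < (m n : ℝ) * q n) :
    volume (achievementSet a) = volume (interior (achievementSet a)) := by
  have H : GFH m k q a := ⟨hm, hk, hq, ha0, ha, hsum, hGF1, hGF2⟩
  exact GFH.main H
end

section
/- Let ∑a_n be a series with positive terms and for each n let F_n be the set of n-initial subsums and δ(F_n) the minimal distance between distinct elements of F_n. If r_n < δ(F_n) for infinitely many n, then the achievement set A(a_n) has empty interior; in particular, if it is infinite, it is a Cantor set. -/
open Set MeasureTheory Pointwise

/-- The minimal distance between distinct elements of a set of reals. -/
noncomputable def minGap (S : Set ℝ) : ℝ :=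
  sInf {d | ∃ s ∈ S, ∃ t ∈ S, s ≠ t ∧ d = |s - t|}

/-!
Every subsum of `∑ a i` exceeds its `n`-initial part by at most `r_n`, so the achievement set is
covered by the intervals `[f, f + r_n]`, `f ∈ F_n`. When `r_n < δ(F_n)`, the stretch
`(f + r_n, f + δ(F_n))` just above each of these intervals meets none of them, so no ball of
radius larger than `r_n` centred in the achievement set is contained in it; as `r_n → 0`, the
interior is empty. Perfectness comes from flipping a single small term `a_N` in or out of a subsum.
-/

open Filter Topology

theorem minGap_le_abs_sub {S : Set ℝ} {s t : ℝ} (hs : s ∈ S) (ht : t ∈ S) (hne : s ≠ t) :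
    minGap S ≤ |s - t| := by
  refine csInf_le ⟨0, ?_⟩ ⟨s, hs, t, ht, hne, rfl⟩
  rintro d ⟨u, -, v, -, -, rfl⟩
  exact abs_nonneg _

theorem notMem_biUnion_Icc_of_lt_minGap {S : Set ℝ} {r f y : ℝ} (hf : f ∈ S) (hfy : f + r < y)
    (hy : y < f + minGap S) : y ∉ ⋃ g ∈ S, Icc g (g + r) := by
  simp only [mem_iUnion, mem_Icc, not_exists, not_and]
  intro g hg hgy hyg
  have hgf : f < g := by linarith
  have := minGap_le_abs_sub hg hf hgf.ne'
  rw [abs_of_pos (sub_pos.mpr hgf)] at this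
  linarith

section AchievementSet

variable {a : ℕ → ℝ}

theorem mem_achievementSet_iff {x : ℝ} :
    x ∈ achievementSet a ↔ ∃ I : Set ℕ, HasSum (I.indicator a) x :=
  exists_congr fun _ => hasSum_subtype_iff_indicator

theorem zero_mem_achievementSet : (0 : ℝ) ∈ achievementSet a :=
  mem_achievementSet_iff.mpr ⟨∅, by simpa only [indicator_empty] using hasSum_zero⟩

theorem tendsto_tail_atTop_zero : Tendsto (tail a) atTop (𝓝 0) := by
  convert tendsto_sum_nat_add a using 2 with n
  exact tsum_congr fun i => by rw [add_comm]

theorem achievementSet_subset_iter (ha : ∀ n, 0 ≤ a n) (hsum : Summable a) (n : ℕ) :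
    achievementSet a ⊆ iter a n := by
  classical
  intro x hx
  obtain ⟨I, hI⟩ := mem_achievementSet_iff.mp hx
  set f := ∑ i ∈ Finset.range n, I.indicator a i
  have hf : f ∈ Fset a n :=
    ⟨{i ∈ Finset.range n | i ∈ I}, Finset.filter_subset _ _,
      Finset.sum_indicator_eq_sum_filter _ (fun _ => a) (fun _ => I) id⟩
  have hrest : HasSum (fun i => I.indicator a (i + n)) (x - f) := (hasSum_nat_add_iff' n).mpr hI
  have hrest_nonneg : 0 ≤ x - f := hrest.nonneg fun i => indicator_nonneg (fun j _ => ha j) _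
  have hrest_le : x - f ≤ tail a n :=
    hasSum_le (fun i => by rw [add_comm]; exact indicator_le_self' (fun j _ => ha j) _) hrest
      (hsum.comp_injective (add_right_injective n)).hasSum
  exact mem_biUnion hf ⟨by linarith, by linarith⟩

theorem isCompact_achievementSet (hsum : Summable a) : IsCompact (achievementSet a) := by
  classical
  have hrange : range (fun b : ℕ → Bool => ∑' i, {j | b j}.indicator a i) = achievementSet a := by
    ext x
    simp only [mem_range, mem_achievementSet_iff]
    constructor
    · rintro ⟨b, rfl⟩
      exact ⟨_, (hsum.indicator _).hasSum⟩
    · rintro ⟨I, hI⟩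
      exact ⟨fun i => decide (i ∈ I),
        by simpa only [decide_eq_true_eq, ofPred_mem_eq] using hI.tsum_eq⟩
  rw [← hrange]
  refine isCompact_range (continuous_tsum (fun i => ?_) hsum.abs fun i b => ?_)
  · simp only [indicator_apply, mem_ofPred_eq]
    exact (continuous_of_discreteTopology (f := fun v : Bool => if v = true then a i else 0)).comp
      (continuous_apply i)
  · exact norm_indicator_le_norm_self a i

theorem exists_mem_achievementSet_abs_sub_eq {x : ℝ} (hx : x ∈ achievementSet a) (N : ℕ) :
    ∃ y ∈ achievementSet a, |y - x| = |a N| := by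
  classical
  obtain ⟨I, hI⟩ := mem_achievementSet_iff.mp hx
  have hN : HasSum (({N} : Set ℕ).indicator a) (a N) := by
    rw [indicator_singleton]
    exact hasSum_pi_single N (a N)
  by_cases hNI : N ∈ I
  · refine ⟨x - a N, mem_achievementSet_iff.mpr ⟨I \ {N}, ?_⟩, by simp⟩
    rw [indicator_sdiff (singleton_subset_iff.mpr hNI)]
    exact hI.sub hN
  · refine ⟨x + a N, mem_achievementSet_iff.mpr ⟨I ∪ {N}, ?_⟩, by simp⟩
    rw [indicator_union_of_disjoint (disjoint_singleton_right.mpr hNI)]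
    exact hI.add hN

theorem perfect_achievementSet (hsum : Summable a) (ha : {n | a n ≠ 0}.Infinite) :
    Perfect (achievementSet a) := by
  refine ⟨(isCompact_achievementSet hsum).isClosed, fun x hx => accPt_iff_nhds.mpr fun U hU => ?_⟩
  obtain ⟨ε, hε, hεU⟩ := Metric.mem_nhds_iff.mp hU
  obtain ⟨N, hNε, hN0⟩ := ((Metric.tendsto_nhds.mp hsum.tendsto_atTop_zero ε hε).and_frequently
    (Nat.frequently_atTop_iff_infinite.mpr ha)).exists
  obtain ⟨y, hy, hyx⟩ := exists_mem_achievementSet_abs_sub_eq hx N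
  refine ⟨y, ⟨hεU ?_, hy⟩, fun hxy => hN0 (abs_eq_zero.mp (by rw [← hyx, hxy, sub_self, abs_zero]))⟩
  rwa [Metric.mem_ball, Real.dist_eq, hyx, ← Real.norm_eq_abs, ← dist_zero_right]

theorem interior_achievementSet_eq_empty (ha : ∀ n, 0 ≤ a n) (hsum : Summable a)
    (h : ∃ᶠ n in atTop, tail a n < minGap (Fset a n)) : interior (achievementSet a) = ∅ := by
  refine eq_empty_of_forall_notMem fun x hx => ?_
  obtain ⟨ε, hε, hball⟩ := Metric.isOpen_iff.mp isOpen_interior x hx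
  obtain ⟨n, hnε, hngap⟩ :=
    ((tendsto_tail_atTop_zero.eventually_lt_const hε).and_frequently h).exists
  have hcover := achievementSet_subset_iter ha hsum n
  obtain ⟨f, hf, hfx, hxf⟩ := mem_iUnion₂.mp (hcover (interior_subset hx))
  set m := min ε (minGap (Fset a n))
  have hrm : tail a n < m := lt_min hnε hngap
  have hmε : m ≤ ε := min_le_left _ _
  have hmgap : m ≤ minGap (Fset a n) := min_le_right _ _
  have hy : f + (tail a n + m) / 2 ∈ Metric.ball x ε := by
    rw [Metric.mem_ball, Real.dist_eq, abs_lt]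
    constructor <;> linarith
  exact notMem_biUnion_Icc_of_lt_minGap hf (by linarith) (by linarith)
    (hcover (interior_subset (hball hy)))

end AchievementSet

/-- If r_n < δ(F_n) for infinitely many n, the achievement set has
empty interior; in particular, if it is infinite, it is a Cantor set. -/
theorem stmt_11 (a : ℕ → ℝ) (hpos : ∀ n, 0 < a n) (hsum : Summable a)
    (h : {n : ℕ | tail a n < minGap (Fset a n)}.Infinite) :
    interior (achievementSet a) = ∅ ∧
      ((achievementSet a).Infinite → IsCantorSet (achievementSet a)) := by
  have hint : interior (achievementSet a) = ∅ := interior_achievementSet_eq_empty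
    (fun n => (hpos n).le) hsum (Nat.frequently_atTop_iff_infinite.mpr h)
  have hnonzero : {n | a n ≠ 0}.Infinite := by
    simpa only [fun n => (hpos n).ne', ne_eq, not_false_eq_true, ofPred_true] using infinite_univ
  exact ⟨hint, fun _ => ⟨⟨0, zero_mem_achievementSet⟩, isCompact_achievementSet hsum,
    perfect_achievementSet hsum hnonzero, hint⟩⟩
end

section
/- Every achievement set of a convergent series of positive terms with infinitely many nonzero terms is the algebraic sum of two achievement sets that are Cantor sets of Lebesgue measure zero. That is, for every such series ∑a_n there is a partition of its terms into two infinite subsequences (y_n) and (z_n) such that A(y_n) and A(z_n) are Cantor sets of measure zero, and A(y_n) + A(z_n) = A(a_n). -/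
open Set MeasureTheory Pointwise Filter Topology
open scoped ENNReal

private lemma mem_ach_iff {c : ℕ → ℝ} {x : ℝ} :
    x ∈ achievementSet c ↔ ∃ I : Set ℕ, HasSum (I.indicator c) x := by
  constructor
  · rintro ⟨I, hI⟩; exact ⟨I, hasSum_subtype_iff_indicator.mp hI⟩
  · rintro ⟨I, hI⟩; exact ⟨I, hasSum_subtype_iff_indicator.mpr hI⟩

private lemma zero_mem_ach (c : ℕ → ℝ) : (0 : ℝ) ∈ achievementSet c :=
  mem_ach_iff.mpr ⟨∅, by simpa [Set.indicator_empty] using hasSum_zero⟩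

private lemma hasSum_indicator_singleton (c : ℕ → ℝ) (n : ℕ) :
    HasSum (Set.indicator {n} c) (c n) := by
  have h : Set.indicator {n} c = fun i => if i = n then c n else 0 := by
    funext i; by_cases h : i = n <;> simp [Set.indicator_apply, h]
  rw [h]
  exact hasSum_ite_eq n (c n)

private lemma ach_isCompact {c : ℕ → ℝ} (hc0 : ∀ n, 0 ≤ c n) (hc : Summable c) :
    IsCompact (achievementSet c) := by
  classical
  have hΦ : Continuous (fun s : ℕ → Bool => ∑' n, if s n then c n else 0) := by
    apply continuous_tsum (u := c) ?_ hc ?_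
    · intro i
      exact (continuous_of_discreteTopology
        (f := fun t : Bool => if t then c i else 0)).comp (continuous_apply i)
    · intro n s
      by_cases h : s n <;> simp [h, Real.norm_eq_abs, abs_of_nonneg (hc0 n), hc0 n]
  have heq : achievementSet c
      = Set.range (fun s : ℕ → Bool => ∑' n, if s n then c n else 0) := by
    ext x
    rw [mem_ach_iff]
    constructor
    · rintro ⟨I, hI⟩
      refine ⟨fun n => decide (n ∈ I), ?_⟩
      have he : (fun n => if decide (n ∈ I) then c n else 0) = I.indicator c := by
        funext n; by_cases h : n ∈ I <;> simp [Set.indicator_apply, h]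
      show ∑' n, (if decide (n ∈ I) then c n else 0) = x
      rw [he]
      exact hI.tsum_eq
    · rintro ⟨s, rfl⟩
      refine ⟨{n | s n = true}, ?_⟩
      have he : Set.indicator {n | s n = true} c = fun n => if s n then c n else 0 := by
        funext n; by_cases h : s n <;> simp [Set.indicator_apply, h]
      rw [he]
      have hsum2 : Summable (fun n => if s n then c n else 0) := by
        rw [← he]; exact hc.indicator _
      exact hsum2.hasSum
  rw [heq]
  exact isCompact_range hΦ

private lemma ach_perfect {c : ℕ → ℝ} (hc0 : ∀ n, 0 ≤ c n) (hc : Summable c)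
    (hinf : {n | c n ≠ 0}.Infinite) (hcl : IsClosed (achievementSet c)) :
    Perfect (achievementSet c) := by
  refine ⟨hcl, fun x hx => accPt_iff_nhds.mpr fun U hU => ?_⟩
  obtain ⟨ε, hε, hball⟩ := Metric.mem_nhds_iff.mp hU
  obtain ⟨N, hN⟩ := Metric.tendsto_atTop.mp hc.tendsto_atTop_zero ε hε
  obtain ⟨n, hnmem, hnN⟩ := hinf.exists_gt N
  have hcn : c n ≠ 0 := hnmem
  have hcnpos : 0 < c n := (hc0 n).lt_of_ne (Ne.symm hcn)
  have hcnlt : c n < ε := by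
    have := hN n hnN.le
    rwa [Real.dist_eq, sub_zero, abs_of_nonneg (hc0 n)] at this
  obtain ⟨I, hI⟩ := mem_ach_iff.mp hx
  by_cases hn : n ∈ I
  · -- remove n
    have hd : Disjoint (I \ {n}) ({n} : Set ℕ) := Set.disjoint_sdiff_left
    have hun : (I \ {n}) ∪ {n} = I := Set.diff_union_of_subset (by simpa using hn)
    have h1 : HasSum ((I \ {n}).indicator c) (∑' m, (I \ {n}).indicator c m) :=
      (hc.indicator _).hasSum
    have h2 := h1.add (hasSum_indicator_singleton c n)
    rw [← Set.indicator_union_of_disjoint hd, hun] at h2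
    have hxe : x = (∑' m, (I \ {n}).indicator c m) + c n := hI.unique h2
    refine ⟨∑' m, (I \ {n}).indicator c m, ⟨hball ?_, mem_ach_iff.mpr ⟨_, h1⟩⟩, ?_⟩
    · rw [Metric.mem_ball, Real.dist_eq, hxe]
      rw [show (∑' m, (I \ {n}).indicator c m) - ((∑' m, (I \ {n}).indicator c m) + c n)
          = -(c n) by ring]
      rwa [abs_neg, abs_of_nonneg (hc0 n)]
    · intro h; rw [h] at hxe; nlinarith [hxe]
  · -- add n
    have hd : Disjoint I ({n} : Set ℕ) := by simpa [Set.disjoint_singleton_right] using hn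
    have h2 := hI.add (hasSum_indicator_singleton c n)
    rw [← Set.indicator_union_of_disjoint hd] at h2
    refine ⟨x + c n, ⟨hball ?_, mem_ach_iff.mpr ⟨_, h2⟩⟩, ?_⟩
    · rw [Metric.mem_ball, Real.dist_eq]
      rw [show x + c n - x = c n by ring]
      rwa [abs_of_nonneg (hc0 n)]
    · intro h; nlinarith [h]

private lemma ach_volume_zero {a c : ℕ → ℝ} (hc0 : ∀ n, 0 ≤ c n) (hca : ∀ n, c n ≤ a n)
    (ha : Summable a) (hc : Summable c)
    (H : ∀ j : ℕ, ∃ (s : Finset ℕ) (K : ℕ),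
      (∀ n, c n ≠ 0 → n ∉ s → K ≤ n) ∧
      (2:ℝ) ^ s.card * (∑' i, a (i + K)) ≤ (1/2) ^ j) :
    volume (achievementSet c) = 0 := by
  classical
  have key : ∀ j : ℕ, volume (achievementSet c) ≤ ENNReal.ofReal ((1/2) ^ j) := by
    intro j
    obtain ⟨s, K, hsK, hbound⟩ := H j
    set r : ℝ := ∑' i, a (i + K) with hr
    have hrnn : 0 ≤ r := tsum_nonneg fun i => le_trans (hc0 _) (hca _)
    have hsubset : achievementSet c ⊆
        ⋃ u ∈ s.powerset, Set.Icc (∑ i ∈ u, c i) ((∑ i ∈ u, c i) + r) := by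
      intro x hx
      obtain ⟨I, hI⟩ := mem_ach_iff.mp hx
      set u : Finset ℕ := s.filter (· ∈ I) with hu
      have hus : u ⊆ s := Finset.filter_subset _ _
      have huI : (↑u : Set ℕ) ⊆ I := by
        intro m hm
        exact (Finset.mem_filter.mp (by exact_mod_cast hm)).2
      have hdisj : Disjoint (↑u : Set ℕ) (I \ ↑u) := Set.disjoint_sdiff_right
      have hunion : (↑u : Set ℕ) ∪ (I \ ↑u) = I := Set.union_diff_cancel huI
      have h1 : HasSum ((↑u : Set ℕ).indicator c) (∑ i ∈ u, c i) := by
        have h1' := hasSum_sum_of_ne_finset_zero (L := SummationFilter.unconditional ℕ) (s := u)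
          (f := (↑u : Set ℕ).indicator c)
          (fun b hb => Set.indicator_of_notMem (by simpa using hb) c)
        have he : ∑ i ∈ u, (↑u : Set ℕ).indicator c i = ∑ i ∈ u, c i :=
          Finset.sum_congr rfl fun i hi => Set.indicator_of_mem (by simpa using hi) c
        rwa [he] at h1'
      set g : ℕ → ℝ := (I \ ↑u).indicator c with hg
      have hgs : Summable g := hc.indicator _
      have h2 : HasSum g (∑' m, g m) := hgs.hasSum
      have h3 := h1.add h2
      rw [← Set.indicator_union_of_disjoint hdisj, hunion] at h3
      have hxe : x = (∑ i ∈ u, c i) + ∑' m, g m := hI.unique h3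
      have hgnn : ∀ m, 0 ≤ g m := fun m => Set.indicator_nonneg (fun i _ => hc0 i) m
      have ht0 : 0 ≤ ∑' m, g m := tsum_nonneg hgnn
      have htr : (∑' m, g m) ≤ r := by
        have hzero : ∀ i ∈ Finset.range K, g i = 0 := by
          intro i hi
          rw [Finset.mem_range] at hi
          by_cases hci : c i = 0
          · by_cases hmem : i ∈ I \ (↑u : Set ℕ)
            · rw [hg]; rw [Set.indicator_of_mem hmem]; exact hci
            · exact Set.indicator_of_notMem hmem c
          · by_cases hmem : i ∈ I \ (↑u : Set ℕ)
            · exfalso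
              have hins : i ∉ s := by
                intro hins
                exact hmem.2 (by exact_mod_cast Finset.mem_filter.mpr ⟨hins, hmem.1⟩)
              exact absurd (hsK i hci hins) (by omega)
            · exact Set.indicator_of_notMem hmem c
        have e1 : ∑' m, g m = ∑' m, g (m + K) := by
          have := Summable.sum_add_tsum_nat_add (f := g) K hgs
          rw [Finset.sum_eq_zero hzero, zero_add] at this
          exact this.symm
        rw [e1, hr]
        refine Summable.tsum_le_tsum ?_ ((summable_nat_add_iff K).mpr hgs)
          ((summable_nat_add_iff K).mpr ha)
        intro i
        exact le_trans (Set.indicator_le_self' (fun m _ => hc0 m) (i + K)) (hca (i + K))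
      refine Set.mem_iUnion₂.mpr ⟨u, Finset.mem_powerset.mpr hus, ?_⟩
      rw [hxe]
      exact ⟨le_add_of_nonneg_right ht0, by linarith⟩
    calc volume (achievementSet c)
        ≤ volume (⋃ u ∈ s.powerset, Set.Icc (∑ i ∈ u, c i) ((∑ i ∈ u, c i) + r)) :=
          measure_mono hsubset
      _ ≤ ∑ u ∈ s.powerset, volume (Set.Icc (∑ i ∈ u, c i) ((∑ i ∈ u, c i) + r)) :=
          measure_biUnion_finset_le _ _
      _ = ∑ _u ∈ s.powerset, ENNReal.ofReal r := by
          refine Finset.sum_congr rfl fun u _ => ?_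
          rw [Real.volume_Icc]; ring_nf
      _ = (s.powerset.card : ℝ≥0∞) * ENNReal.ofReal r := by
          rw [Finset.sum_const, nsmul_eq_mul]
      _ ≤ ENNReal.ofReal ((1/2) ^ j) := by
          rw [Finset.card_powerset, ← ENNReal.ofReal_natCast, ← ENNReal.ofReal_mul (by positivity)]
          apply ENNReal.ofReal_le_ofReal
          calc ((2 ^ s.card : ℕ) : ℝ) * r = (2:ℝ) ^ s.card * r := by push_cast; ring
            _ ≤ (1/2) ^ j := hbound
  have htd : Tendsto (fun j : ℕ => ENNReal.ofReal ((1/2) ^ j)) atTop (𝓝 0) := by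
    rw [show (0 : ℝ≥0∞) = ENNReal.ofReal 0 by simp]
    exact ENNReal.tendsto_ofReal
      (tendsto_pow_atTop_nhds_zero_of_lt_one (by norm_num) (by norm_num))
  have hle : volume (achievementSet c) ≤ 0 := ge_of_tendsto' htd key
  exact le_antisymm hle zero_le

private lemma ach_add {a : ℕ → ℝ} (ha : Summable a) (M : Set ℕ) :
    achievementSet (M.indicator a) + achievementSet (Mᶜ.indicator a) = achievementSet a := by
  ext x
  rw [Set.mem_add]
  constructor
  · rintro ⟨y, hy, z, hz, rfl⟩
    obtain ⟨I, hI⟩ := mem_ach_iff.mp hy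
    obtain ⟨J, hJ⟩ := mem_ach_iff.mp hz
    rw [Set.indicator_indicator] at hI hJ
    have hd : Disjoint (I ∩ M) (J ∩ Mᶜ) :=
      Set.disjoint_of_subset Set.inter_subset_right Set.inter_subset_right
        disjoint_compl_right
    have h := hI.add hJ
    rw [← Set.indicator_union_of_disjoint hd] at h
    exact mem_ach_iff.mpr ⟨_, h⟩
  · intro hx
    obtain ⟨I, hI⟩ := mem_ach_iff.mp hx
    have h1 : Summable ((I ∩ M).indicator a) := ha.indicator _
    have h2 : Summable ((I ∩ Mᶜ).indicator a) := ha.indicator _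
    have hd : Disjoint (I ∩ M) (I ∩ Mᶜ) :=
      Set.disjoint_of_subset Set.inter_subset_right Set.inter_subset_right
        disjoint_compl_right
    have hu : (I ∩ M) ∪ (I ∩ Mᶜ) = I := by
      rw [← Set.inter_union_distrib_left, Set.union_compl_self, Set.inter_univ]
    have hadd := h1.hasSum.add h2.hasSum
    rw [← Set.indicator_union_of_disjoint hd, hu] at hadd
    have hxe : x = (∑' n, (I ∩ M).indicator a n) + ∑' n, (I ∩ Mᶜ).indicator a n :=
      hI.unique hadd
    refine ⟨_, ?_, _, ?_, hxe.symm⟩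
    · refine mem_ach_iff.mpr ⟨I ∩ M, ?_⟩
      rw [Set.indicator_indicator, Set.inter_assoc, Set.inter_self]
      exact h1.hasSum
    · refine mem_ach_iff.mpr ⟨I ∩ Mᶜ, ?_⟩
      rw [Set.indicator_indicator, Set.inter_assoc, Set.inter_self]
      exact h2.hasSum

private lemma ach_interior_empty {c : ℕ → ℝ} (hvol : volume (achievementSet c) = 0) :
    interior (achievementSet c) = ∅ := by
  by_contra h
  obtain ⟨y, hy⟩ := Set.nonempty_iff_ne_empty.mpr h
  have hpos : 0 < volume (interior (achievementSet c)) :=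
    isOpen_interior.measure_pos volume ⟨y, hy⟩
  have := measure_mono (μ := volume) (interior_subset (s := achievementSet c))
  rw [hvol] at this
  exact absurd (le_antisymm this zero_le) hpos.ne'

theorem stmt_12 (a : ℕ → ℝ) (hpos : ∀ n, 0 < a n) (hmono : Antitone a)
    (hsum : Summable a) :
    ∃ M : Set ℕ, M.Infinite ∧ Mᶜ.Infinite ∧
      IsCantorSet (achievementSet (M.indicator a)) ∧
      volume (achievementSet (M.indicator a)) = 0 ∧
      IsCantorSet (achievementSet (Mᶜ.indicator a)) ∧
      volume (achievementSet (Mᶜ.indicator a)) = 0 ∧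
      achievementSet (M.indicator a) + achievementSet (Mᶜ.indicator a)
        = achievementSet a := by
  classical
  set rest : ℕ → ℝ := fun K => ∑' i, a (i + K) with hrestdef
  have hrest0 : ∀ K, 0 ≤ rest K := fun K => tsum_nonneg fun i => (hpos _).le
  have hrtend : Tendsto rest atTop (𝓝 0) := tendsto_sum_nat_add a
  have hnext : ∀ (m : ℕ) (ε : ℝ), 0 < ε → ∃ m', m < m' ∧ rest m' ≤ ε := by
    intro m ε hε
    obtain ⟨N, hN⟩ := Metric.tendsto_atTop.mp hrtend ε hε
    refine ⟨max N (m + 1), by omega, ?_⟩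
    have := hN (max N (m + 1)) (le_max_left _ _)
    rw [Real.dist_eq, sub_zero, abs_of_nonneg (hrest0 _)] at this
    exact this.le
  obtain ⟨k, hk0, hklt, hkb⟩ : ∃ k : ℕ → ℕ, k 0 = 0 ∧ (∀ j, k j < k (j + 1)) ∧
      ∀ j, (2:ℝ) ^ (k j) * rest (k (j + 1)) ≤ (1/2) ^ j := by
    have hch : ∀ (j m : ℕ), ∃ m', m < m' ∧ rest m' ≤ (1/2) ^ j / 2 ^ m :=
      fun j m => hnext m ((1/2) ^ j / 2 ^ m) (by positivity)
    choose f hf1 hf2 using hch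
    refine ⟨fun j => Nat.rec 0 f j, rfl, fun j => hf1 j _, fun j => ?_⟩
    have h := hf2 j (Nat.rec 0 f j)
    have h2 : (0:ℝ) < 2 ^ (Nat.rec 0 f j : ℕ) := by positivity
    calc (2:ℝ) ^ (Nat.rec 0 f j : ℕ) * rest (f j (Nat.rec 0 f j))
        ≤ 2 ^ (Nat.rec 0 f j : ℕ) * ((1/2) ^ j / 2 ^ (Nat.rec 0 f j : ℕ)) :=
          mul_le_mul_of_nonneg_left h h2.le
      _ = (1/2) ^ j := by field_simp
  have hkmono : StrictMono k := strictMono_nat_of_lt_succ hklt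
  set M : Set ℕ := {n | ∃ j, k (2 * j + 1) ≤ n ∧ n < k (2 * j + 2)} with hM
  have hMinf : M.Infinite := by
    refine Set.infinite_of_injective_forall_mem (f := fun j : ℕ => k (2 * j + 1)) ?_ ?_
    · intro i j hij
      have := hkmono.injective hij
      omega
    · intro j
      exact ⟨j, le_refl _, hkmono (by omega)⟩
  have hnotM : ∀ j, k (2 * j) ∉ M := by
    rintro j ⟨i, h1, h2⟩
    have e1 : 2 * i + 1 ≤ 2 * j := hkmono.le_iff_le.mp h1
    have e2 : 2 * j < 2 * i + 2 := hkmono.lt_iff_lt.mp h2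
    omega
  have hMcinf : Mᶜ.Infinite := by
    refine Set.infinite_of_injective_forall_mem (f := fun j : ℕ => k (2 * j)) ?_ ?_
    · intro i j hij
      have := hkmono.injective hij
      omega
    · exact hnotM
  have hMge : ∀ n ∈ M, ∀ j, k (2 * j) ≤ n → k (2 * j + 1) ≤ n := by
    rintro n ⟨i, hi1, hi2⟩ j hj
    rcases le_or_gt (2 * i + 2) (2 * j) with h | h
    · exact absurd (lt_of_lt_of_le hi2 (hkmono.monotone h)) (not_lt.mpr hj)
    · exact le_trans (hkmono.monotone (by omega)) hi1
  have hMcge : ∀ n, n ∉ M → ∀ j, k (2 * j + 1) ≤ n → k (2 * j + 2) ≤ n := by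
    intro n hn j hj
    by_contra h
    exact hn ⟨j, hj, lt_of_not_ge h⟩
  -- basic facts about the indicator sequences
  have hb0M : ∀ n, 0 ≤ M.indicator a n := fun n =>
    Set.indicator_nonneg (fun m _ => (hpos m).le) n
  have hb0Mc : ∀ n, 0 ≤ Mᶜ.indicator a n := fun n =>
    Set.indicator_nonneg (fun m _ => (hpos m).le) n
  have hbleM : ∀ n, M.indicator a n ≤ a n := fun n =>
    Set.indicator_le_self' (fun m _ => (hpos m).le) n
  have hbleMc : ∀ n, Mᶜ.indicator a n ≤ a n := fun n =>
    Set.indicator_le_self' (fun m _ => (hpos m).le) n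
  have hsM : Summable (M.indicator a) := hsum.indicator _
  have hsMc : Summable (Mᶜ.indicator a) := hsum.indicator _
  have hsuppM : {n | M.indicator a n ≠ 0}.Infinite := by
    apply hMinf.mono
    intro n hn
    simp only [mem_setOf_eq, Set.indicator_of_mem hn]
    exact (hpos n).ne'
  have hsuppMc : {n | Mᶜ.indicator a n ≠ 0}.Infinite := by
    apply hMcinf.mono
    intro n hn
    simp only [mem_setOf_eq, Set.indicator_of_mem hn]
    exact (hpos n).ne'
  -- volume-zero statements
  have hvolM : volume (achievementSet (M.indicator a)) = 0 := by
    apply ach_volume_zero hb0M hbleM hsum hsM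
    intro j
    refine ⟨(Finset.range (k (2 * j))).filter (· ∈ M), k (2 * j + 1), ?_, ?_⟩
    · intro n hn hns
      have hnM : n ∈ M := by
        by_contra h
        exact hn (Set.indicator_of_notMem h a)
      have hge : k (2 * j) ≤ n := by
        by_contra h
        exact hns (Finset.mem_filter.mpr ⟨Finset.mem_range.mpr (lt_of_not_ge h), hnM⟩)
      exact hMge n hnM j hge
    · have hcard : ((Finset.range (k (2 * j))).filter (· ∈ M)).card ≤ k (2 * j) := by
        calc ((Finset.range (k (2 * j))).filter (· ∈ M)).card
            ≤ (Finset.range (k (2 * j))).card := Finset.card_filter_le _ _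
          _ = k (2 * j) := Finset.card_range _
      calc (2:ℝ) ^ ((Finset.range (k (2 * j))).filter (· ∈ M)).card * rest (k (2 * j + 1))
          ≤ (2:ℝ) ^ (k (2 * j)) * rest (k (2 * j + 1)) := by
            apply mul_le_mul_of_nonneg_right _ (hrest0 _)
            exact pow_le_pow_right₀ (by norm_num) hcard
        _ ≤ (1/2) ^ (2 * j) := hkb (2 * j)
        _ ≤ (1/2) ^ j := pow_le_pow_of_le_one (by norm_num) (by norm_num) (by omega)
  have hvolMc : volume (achievementSet (Mᶜ.indicator a)) = 0 := by
    apply ach_volume_zero hb0Mc hbleMc hsum hsMc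
    intro j
    refine ⟨(Finset.range (k (2 * j + 1))).filter (· ∉ M), k (2 * j + 2), ?_, ?_⟩
    · intro n hn hns
      have hnM : n ∉ M := by
        intro h
        exact hn (Set.indicator_of_notMem (by simpa using h) a)
      have hge : k (2 * j + 1) ≤ n := by
        by_contra h
        exact hns (Finset.mem_filter.mpr ⟨Finset.mem_range.mpr (lt_of_not_ge h), hnM⟩)
      exact hMcge n hnM j hge
    · have hcard : ((Finset.range (k (2 * j + 1))).filter (· ∉ M)).card ≤ k (2 * j + 1) := by
        calc ((Finset.range (k (2 * j + 1))).filter (· ∉ M)).card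
            ≤ (Finset.range (k (2 * j + 1))).card := Finset.card_filter_le _ _
          _ = k (2 * j + 1) := Finset.card_range _
      calc (2:ℝ) ^ ((Finset.range (k (2 * j + 1))).filter (· ∉ M)).card
            * rest (k (2 * j + 2))
          ≤ (2:ℝ) ^ (k (2 * j + 1)) * rest (k (2 * j + 2)) := by
            apply mul_le_mul_of_nonneg_right _ (hrest0 _)
            exact pow_le_pow_right₀ (by norm_num) hcard
        _ ≤ (1/2) ^ (2 * j + 1) := hkb (2 * j + 1)
        _ ≤ (1/2) ^ j := pow_le_pow_of_le_one (by norm_num) (by norm_num) (by omega)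
  -- Cantor set statements
  have hcantM : IsCantorSet (achievementSet (M.indicator a)) := by
    have hcompact := ach_isCompact hb0M hsM
    exact ⟨⟨0, zero_mem_ach _⟩, hcompact, ach_perfect hb0M hsM hsuppM hcompact.isClosed,
      ach_interior_empty hvolM⟩
  have hcantMc : IsCantorSet (achievementSet (Mᶜ.indicator a)) := by
    have hcompact := ach_isCompact hb0Mc hsMc
    exact ⟨⟨0, zero_mem_ach _⟩, hcompact, ach_perfect hb0Mc hsMc hsuppMc hcompact.isClosed,
      ach_interior_empty hvolMc⟩
  exact ⟨M, hMinf, hMcinf, hcantM, hvolM, hcantMc, hvolMc, ach_add hsum M⟩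
end

section
/- Let (a_n) be a nonincreasing interval-filling sequence (a_n ≤ r_n for all n). If (a_n) can be partitioned into two infinite nonincreasing subsequences (y_n) and (z_n), both interval-filling, then there exists k such that a_{n−1} + a_n ≤ r_n for all n ≥ k. -/
open Set MeasureTheory Pointwise

/-- The subsequence of a indexed by M is interval-filling: each term is at most the
sum of the later terms of the subsequence. -/
def SubIF (a : ℕ → ℝ) (M : Set ℕ) : Prop :=
  ∀ n ∈ M, a n ≤ ∑' i : {j : ℕ // j ∈ M ∧ n < j}, a i

/-- The subsequence of a indexed by M is fast convergent: each term exceeds the sum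
of the later terms of the subsequence. -/
def SubFC (a : ℕ → ℝ) (M : Set ℕ) : Prop :=
  ∀ n ∈ M, (∑' i : {j : ℕ // j ∈ M ∧ n < j}, a i) < a n


/-- Auxiliary equivalence between `ℕ` and the naturals greater than `n`. -/
def tailEquiv (n : ℕ) : ℕ ≃ {j : ℕ | n < j} where
  toFun i := ⟨n + 1 + i, by simp only [Set.mem_setOf_eq]; omega⟩
  invFun j := j.1 - (n + 1)
  left_inv i := by simp
  right_inv j := by
    have hj : n < j.1 := j.2
    ext; simp only []; omega

/-- The tail of the series splits as the sum over `M` plus the sum over `Mᶜ`. -/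
lemma tail_split (a : ℕ → ℝ) (hsum : Summable a) (M : Set ℕ) (n : ℕ) :
    tail a (n + 1) = (∑' i : {j : ℕ // j ∈ M ∧ n < j}, a i)
      + ∑' i : {j : ℕ // j ∈ Mᶜ ∧ n < j}, a i := by
  have hdisj : Disjoint {j : ℕ | j ∈ M ∧ n < j} {j : ℕ | j ∈ Mᶜ ∧ n < j} := by
    rw [Set.disjoint_left]; rintro x ⟨hx, -⟩ ⟨hx', -⟩; exact hx' hx
  have hunion : {j : ℕ | j ∈ M ∧ n < j} ∪ {j : ℕ | j ∈ Mᶜ ∧ n < j} = {j : ℕ | n < j} := by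
    ext x; by_cases hx : x ∈ M <;> simp [hx]
  have h := Summable.tsum_union_disjoint (f := a) hdisj (hsum.subtype _) (hsum.subtype _)
  rw [hunion] at h
  have he : tail a (n + 1) = ∑' x : {j : ℕ | n < j}, a x := by
    rw [← (tailEquiv n).tsum_eq (fun x : {j : ℕ | n < j} => a x)]
    exact tsum_congr fun i => rfl
  rw [he, h]; rfl

/-- If `m` is the largest element of `S` below `n`, then `a m` is at most the sum of
the terms of the subsequence indexed by `S` beyond `n`. -/
lemma key_subIF (a : ℕ → ℝ) (S : Set ℕ) (hS : SubIF a S)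
    (m n : ℕ) (hmn : m ≤ n) (hm : m ∈ S)
    (hmax : ∀ j, m < j → j ≤ n → j ∉ S) :
    a m ≤ ∑' i : {j : ℕ // j ∈ S ∧ n < j}, a i := by
  have hset : (fun j : ℕ => j ∈ S ∧ m < j) = fun j : ℕ => j ∈ S ∧ n < j := by
    funext j; ext
    constructor
    · rintro ⟨hj, hmj⟩
      refine ⟨hj, ?_⟩
      by_contra hnj
      exact hmax j hmj (by omega) hj
    · rintro ⟨hj, hnj⟩; exact ⟨hj, by omega⟩
  have := hS m hm
  rwa [hset] at this

/-- If a nonincreasing interval-filling sequence decomposes into two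
infinite interval-filling subsequences, then a_{n-1} + a_n ≤ r_n for all large n. -/
theorem stmt_16 (a : ℕ → ℝ) (hpos : ∀ n, 0 < a n) (hmono : Antitone a)
    (hsum : Summable a) (hIF : ∀ n, a n ≤ tail a (n + 1))
    (M : Set ℕ) (hM : M.Infinite) (hMc : Mᶜ.Infinite)
    (hy : SubIF a M) (hz : SubIF a Mᶜ) :
    ∃ k : ℕ, 1 ≤ k ∧ ∀ n, k ≤ n → a (n - 1) + a n ≤ tail a (n + 1) := by
  classical
  obtain ⟨m0, hm0⟩ := hM.nonempty
  obtain ⟨m1, hm1⟩ := hMc.nonempty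
  refine ⟨max m0 m1 + 1, by omega, fun n hn => ?_⟩
  have hm0n : m0 ≤ n := by omega
  have hm1n : m1 ≤ n := by omega
  rw [tail_split a hsum M n]
  by_cases hnM : n ∈ M
  · -- take the largest element of `Mᶜ` below `n`
    set m := Nat.findGreatest (· ∈ Mᶜ) n with hm_def
    have hmem : m ∈ Mᶜ := Nat.findGreatest_spec hm1n hm1
    have hmle : m ≤ n := Nat.findGreatest_le n
    have hmne : m ≠ n := fun h => hmem (h ▸ hnM)
    have h1 : a m ≤ ∑' i : {j : ℕ // j ∈ Mᶜ ∧ n < j}, a i :=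
      key_subIF a Mᶜ hz m n hmle hmem fun j hj hjn hjS =>
        Nat.findGreatest_is_greatest hj hjn hjS
    have h2 : a n ≤ ∑' i : {j : ℕ // j ∈ M ∧ n < j}, a i :=
      key_subIF a M hy n n le_rfl hnM (fun j hj hjn _ => by omega)
    have h3 : a (n - 1) ≤ a m := hmono (by omega)
    linarith
  · set m := Nat.findGreatest (· ∈ M) n with hm_def
    have hmem : m ∈ M := Nat.findGreatest_spec hm0n hm0
    have hmle : m ≤ n := Nat.findGreatest_le n
    have hmne : m ≠ n := fun h => hnM (h ▸ hmem)
    have h1 : a m ≤ ∑' i : {j : ℕ // j ∈ M ∧ n < j}, a i :=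
      key_subIF a M hy m n hmle hmem fun j hj hjn hjS =>
        Nat.findGreatest_is_greatest hj hjn hjS
    have h2 : a n ≤ ∑' i : {j : ℕ // j ∈ Mᶜ ∧ n < j}, a i :=
      key_subIF a Mᶜ hz n n le_rfl hnM (fun j hj hjn _ => by omega)
    have h3 : a (n - 1) ≤ a m := hmono (by omega)
    linarith
end

section
/- Let (a_n) be a nonincreasing interval-filling sequence and k ∈ ℕ. If (2k−1)·a_n ≤ r_n for all n, then the k subsequences (a_{kn−j})_n for j ∈ {0,1,…,k−1} are all interval-filling; in particular, (a_n) admits a decomposition into k interval-filling sequences. -/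
open Set MeasureTheory Pointwise

/-- If (a_n) is nonincreasing, interval-filling and (2k-1)·a_n ≤ r_n
for all n, then each of the k residue-class subsequences is interval-filling:
a_n ≤ a_{n+k} + a_{n+2k} + ⋯ for all n. -/
theorem stmt_18 (a : ℕ → ℝ) (hpos : ∀ n, 0 < a n) (hmono : Antitone a)
    (hsum : Summable a) (hIF : ∀ n, a n ≤ tail a (n + 1))
    (k : ℕ) (hk : 1 ≤ k) (h : ∀ n, (2 * (k : ℝ) - 1) * a n ≤ tail a (n + 1)) :
    ∀ n, a n ≤ ∑' i : ℕ, a (n + k * (i + 1)) := by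
  intro n
  haveI : NeZero k := ⟨by omega⟩
  have hk0 : (0:ℝ) < k := by exact_mod_cast hk
  have hsh : ∀ m, Summable (fun i => a (m + i)) := fun m => by
    simpa [add_comm] using (summable_nat_add_iff m).2 hsum
  have hS : Summable (fun i => a (n + k * (i + 1))) := by
    refine Summable.of_nonneg_of_le (fun i => (hpos _).le) (fun i => hmono ?_) (hsh (n + 1))
    have : i + 1 ≤ k * (i + 1) := Nat.le_mul_of_pos_left _ hk
    omega
  set S := ∑' i : ℕ, a (n + k * (i + 1)) with hSdef
  -- split tail (n+1)
  have hsplit : (∑ j ∈ Finset.range (k - 1), a (n + 1 + j)) + tail a (n + k)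
      = tail a (n + 1) := by
    have := Summable.sum_add_tsum_nat_add (f := fun i => a (n + 1 + i)) (k - 1) (hsh (n + 1))
    have he : ∀ i, n + 1 + (i + (k - 1)) = n + k + i := fun i => by omega
    simpa [tail, he] using this
  -- finite part bound
  have hfin : (∑ j ∈ Finset.range (k - 1), a (n + 1 + j)) ≤ ((k : ℝ) - 1) * a n := by
    calc (∑ j ∈ Finset.range (k - 1), a (n + 1 + j))
        ≤ ∑ j ∈ Finset.range (k - 1), a n :=
          Finset.sum_le_sum (fun j _ => hmono (by omega))
      _ = ((k : ℝ) - 1) * a n := by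
          rw [Finset.sum_const, Finset.card_range, nsmul_eq_mul]
          have : ((k - 1 : ℕ) : ℝ) = (k : ℝ) - 1 := by
            push_cast [Nat.cast_sub hk]; ring
          rw [this]
  -- grouping bound : tail a (n+k) ≤ k * S
  have hgrp : tail a (n + k) ≤ (k : ℝ) * S := by
    have hf : Summable (fun m => a (n + k + m)) := hsh (n + k)
    have hfp : Summable (fun p : ℕ × Fin k => a (n + k + (p.1 * k + p.2))) := by
      have := hf.comp_injective (Nat.divModEquiv k).symm.injective
      simpa [Function.comp_def, Nat.divModEquiv] using this
    have hcol : ∀ j : Fin k, Summable (fun i : ℕ => a (n + k + (i * k + j))) := by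
      intro j
      refine (hsh (n + k)).comp_injective (fun i i' hii' => ?_)
      exact Nat.eq_of_mul_eq_mul_right (by omega) (Nat.add_right_cancel hii')
    have hrows : Summable (fun i : ℕ => ∑ j : Fin k, a (n + k + (i * k + j))) :=
      summable_sum (fun j _ => hcol j)
    have h1 : tail a (n + k) = ∑' (i : ℕ), ∑ j : Fin k, a (n + k + (i * k + j)) := by
      rw [tail, ← Equiv.tsum_eq (Nat.divModEquiv k).symm (fun m => a (n + k + m))]
      simpa [Nat.divModEquiv, tsum_fintype] using Summable.tsum_prod hfp
    rw [h1]
    have h2 : ∀ i : ℕ, (∑ j : Fin k, a (n + k + (i * k + j))) ≤ (k : ℝ) * a (n + k * (i + 1)) := by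
      intro i
      calc (∑ j : Fin k, a (n + k + (i * k + j)))
          ≤ ∑ j : Fin k, a (n + k * (i + 1)) := by
            refine Finset.sum_le_sum (fun j _ => hmono ?_)
            have := j.isLt
            have : k * (i + 1) ≤ k + i * k := by ring_nf; omega
            omega
        _ = (k : ℝ) * a (n + k * (i + 1)) := by
            rw [Finset.sum_const, Finset.card_univ, Fintype.card_fin, nsmul_eq_mul]
    calc (∑' (i : ℕ), ∑ j : Fin k, a (n + k + (i * k + j)))
        ≤ ∑' i : ℕ, (k : ℝ) * a (n + k * (i + 1)) :=
          Summable.tsum_le_tsum h2 hrows (hS.mul_left _)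
      _ = (k : ℝ) * S := tsum_mul_left
  have := h n
  nlinarith [hIF n]
end
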